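/- arXiv:2104.06263 — 10 statements merged into one kernel-verified Lean document; each statement's English description precedes it below -/
import Mathlib

section
/- For all positive integers x and y, the number e^(x/y) is irrational. -/
/-!
Hermite's argument. For `p = (t (m - t))ⁿ` and `S = p + p' + p'' + ⋯`, integrating
`(-S e⁻ᵗ)' = p e⁻ᵗ` gives `eᵐ S(0) - S(m) = eᵐ ∫₀ᵐ p(t) e⁻ᵗ dt`. Since `p` has integer
coefficients and vanishes to order `n` at `0` and at `m`, both `S(0)` and `S(m)` are integers
divisible by `n!`. If `eᵐ = a / b`, then `a S(0) - b S(m)` is a positive multiple of `n!` bounded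
by `b eᵐ m (m² / 4)ⁿ`, which is impossible for large `n`. Finally `e^(x/y)` rational would make
`eˣ = (e^(x/y))ʸ` rational.
-/

open Polynomial Real
open scoped Nat

theorem integral_eval_mul_exp_neg (p : ℝ[X]) (a b : ℝ) :
    ∫ t in a..b, p.eval t * exp (-t) =
      (sumIDeriv p).eval a * exp (-a) - (sumIDeriv p).eval b * exp (-b) := by
  have hderiv (t : ℝ) :
      HasDerivAt (fun s => -((sumIDeriv p).eval s * exp (-s))) (p.eval t * exp (-t)) t := by
    refine (((sumIDeriv p).hasDerivAt t).mul (hasDerivAt_neg t).exp).neg.congr_deriv ?_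
    have hS := congrArg (eval t) (sumIDeriv_eq_self_add p)
    rw [eval_add] at hS
    linear_combination exp (-t) * hS
  rw [intervalIntegral.integral_eq_sub_of_hasDerivAt (fun t _ => hderiv t)
    ((by fun_prop : Continuous fun t => p.eval t * exp (-t)).intervalIntegrable a b)]
  ring

theorem factorial_dvd_eval_sumIDeriv {p : ℤ[X]} {r : ℤ} {q : ℕ} (h : (X - C r) ^ q ∣ p) :
    (q ! : ℤ) ∣ (sumIDeriv p).eval r := by
  obtain ⟨g, -, hg⟩ := aeval_sumIDeriv ℤ p q
  rw [← coe_aeval_eq_eval, hg r (by simpa using h), nsmul_eq_mul]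
  exact dvd_mul_right _ _

theorem exists_mul_pow_lt_factorial (a c : ℝ) : ∃ n : ℕ, a * c ^ n < n ! := by
  simpa using (FloorSemiring.eventually_mul_pow_lt_factorial_sub a c 0).exists

noncomputable def nivenPoly (m n : ℕ) : ℤ[X] := (X * (C (m : ℤ) - X)) ^ n

noncomputable def nivenIntegral (m n : ℕ) : ℝ := ∫ t in (0 : ℝ)..m, (t * (m - t)) ^ n * exp (-t)

section nivenPoly

variable (m n : ℕ)

theorem X_sub_C_zero_pow_dvd_nivenPoly : (X - C 0) ^ n ∣ nivenPoly m n := by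
  rw [nivenPoly, C_0, sub_zero, mul_pow]
  exact dvd_mul_right _ _

theorem X_sub_C_pow_dvd_nivenPoly : (X - C (m : ℤ)) ^ n ∣ nivenPoly m n := by
  have h : C (m : ℤ) - X = -(X - C (m : ℤ)) := (neg_sub _ _).symm
  rw [nivenPoly, mul_pow, h, neg_pow]
  exact dvd_mul_of_dvd_right (dvd_mul_left _ _) _

theorem eval_map_nivenPoly (t : ℝ) :
    ((nivenPoly m n).map (Int.castRingHom ℝ)).eval t = (t * (m - t)) ^ n := by
  simp [nivenPoly]

theorem exp_mul_nivenIntegral :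
    exp m * nivenIntegral m n =
      exp m * (sumIDeriv (nivenPoly m n)).eval 0 - (sumIDeriv (nivenPoly m n)).eval (m : ℤ) := by
  have h := integral_eval_mul_exp_neg ((nivenPoly m n).map (Int.castRingHom ℝ)) 0 m
  simp only [eval_map_nivenPoly, sumIDeriv_map] at h
  rw [nivenIntegral, h, ← Int.cast_natCast m, eval_intCast_map, ← Int.cast_zero, eval_intCast_map]
  simp only [eq_intCast, Int.cast_zero, Int.cast_natCast, neg_zero, exp_zero, mul_one]
  rw [mul_sub, mul_left_comm, ← exp_add, add_neg_cancel, exp_zero, mul_one]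

theorem nivenIntegral_pos (hm : 0 < m) : 0 < nivenIntegral m n := by
  refine intervalIntegral.intervalIntegral_pos_of_pos_on
    (Continuous.intervalIntegrable (by fun_prop) _ _) (fun t ⟨ht₀, htm⟩ => ?_) (by positivity)
  have : 0 < (m : ℝ) - t := sub_pos.2 htm
  positivity

theorem nivenIntegral_le : nivenIntegral m n ≤ m * ((m : ℝ) ^ 2 / 4) ^ n := by
  have hbound (t : ℝ) (ht : t ∈ Set.Icc 0 (m : ℝ)) :
      (t * (m - t)) ^ n * exp (-t) ≤ ((m : ℝ) ^ 2 / 4) ^ n := by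
    obtain ⟨ht₀, htm⟩ := ht
    have h₀ : 0 ≤ t * (m - t) := mul_nonneg ht₀ (sub_nonneg.2 htm)
    have h₁ : t * (m - t) ≤ (m : ℝ) ^ 2 / 4 := by nlinarith [sq_nonneg ((m : ℝ) - 2 * t)]
    have h₂ : exp (-t) ≤ 1 := exp_le_one_iff.2 (by linarith)
    calc (t * (m - t)) ^ n * exp (-t) ≤ (t * (m - t)) ^ n * 1 := by gcongr
      _ ≤ ((m : ℝ) ^ 2 / 4) ^ n := by rw [mul_one]; gcongr
  calc nivenIntegral m n ≤ ∫ _ in (0 : ℝ)..m, ((m : ℝ) ^ 2 / 4) ^ n :=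
        intervalIntegral.integral_mono_on (Nat.cast_nonneg m)
          (Continuous.intervalIntegrable (by fun_prop) _ _) intervalIntegrable_const hbound
    _ = m * ((m : ℝ) ^ 2 / 4) ^ n := by simp

end nivenPoly

theorem irrational_exp_natCast {m : ℕ} (hm : 0 < m) : Irrational (exp m) := by
  rintro ⟨q, hq⟩
  obtain ⟨n, hn⟩ := exists_mul_pow_lt_factorial (q.den * exp m * m) ((m : ℝ) ^ 2 / 4)
  set S := sumIDeriv (nivenPoly m n)
  set k : ℤ := q.num * S.eval 0 - q.den * S.eval (m : ℤ)
  have hk : (k : ℝ) = q.den * (exp m * nivenIntegral m n) := by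
    have hq' : (q.den : ℝ) * exp m = q.num := by
      rw [← hq, Rat.cast_def, mul_div_cancel₀ _ (by positivity)]
    rw [exp_mul_nivenIntegral]
    push_cast [k]
    linear_combination -((S.eval 0 : ℤ) : ℝ) * hq'
  have hk_pos : 0 < k := by
    have hI := nivenIntegral_pos m n hm
    exact_mod_cast hk ▸ (by positivity : (0 : ℝ) < q.den * (exp m * nivenIntegral m n))
  have hdvd : (n ! : ℤ) ∣ k :=
    dvd_sub ((factorial_dvd_eval_sumIDeriv (X_sub_C_zero_pow_dvd_nivenPoly m n)).mul_left _)
      ((factorial_dvd_eval_sumIDeriv (X_sub_C_pow_dvd_nivenPoly m n)).mul_left _)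
  have hfact : (n ! : ℝ) ≤ q.den * exp m * m * ((m : ℝ) ^ 2 / 4) ^ n :=
    calc (n ! : ℝ) ≤ k := by exact_mod_cast Int.le_of_dvd hk_pos hdvd
      _ = q.den * exp m * nivenIntegral m n := by rw [hk, mul_assoc]
      _ ≤ q.den * exp m * (m * ((m : ℝ) ^ 2 / 4) ^ n) := by
        gcongr
        exact nivenIntegral_le m n
      _ = _ := by ring
  exact hn.not_ge hfact

theorem exp_rat_irrational (x y : ℕ) (hx : 0 < x) (hy : 0 < y) :
    Irrational (Real.exp ((x : ℝ) / (y : ℝ))) := by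
  refine Irrational.of_pow y ?_
  rw [← exp_nat_mul, mul_div_cancel₀ _ (by positivity)]
  exact irrational_exp_natCast hx
end

section
/- For every nonzero rational number r, the number e^r = exp(r) is irrational. -/
/-!
For a nonzero integer `n`, Hermite's integrals (packaged in Mathlib as
`LindemannWeierstrass.exp_polynomial_approx`, applied to the polynomial `X - n`) give, for every
large prime `p`, integers `N`, `m` with `p ∤ N` and `|N e^n - p m| ≤ c^p / (p - 1)!`.
If `e^n = A / B`, then `B (N e^n - p m) = N A - p B m` is an integer prime to `p` once `p > |A|`,
so it has absolute value at least `1`, whereas `B c^p / (p - 1)! → 0`.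
For `r = a / b` we have `(e^r)^b = e^a`, so `e^r` is irrational too.
-/

open Filter Topology Polynomial
open scoped Nat

theorem tendsto_pow_div_factorial_pred_atTop (c : ℝ) :
    Tendsto (fun p : ℕ => c ^ p / (p - 1)!) atTop (𝓝 0) := by
  have h := ((FloorSemiring.tendsto_pow_div_factorial_atTop c).comp
    (tendsto_sub_atTop_nat 1)).const_mul c
  rw [mul_zero] at h
  refine h.congr' ((eventually_ge_atTop 1).mono fun p hp => ?_)
  obtain ⟨k, rfl⟩ := Nat.exists_eq_add_of_le' hp
  simp [pow_succ, mul_div_assoc, mul_comm]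

theorem irrational_of_prime_approx {x : ℝ} (hx : x ≠ 0) {ε : ℕ → ℝ}
    (hε : Tendsto ε atTop (𝓝 0))
    (happrox : ∀ᶠ p : ℕ in atTop, p.Prime → ∃ N m : ℤ, ¬ (p : ℤ) ∣ N ∧ |N * x - p * m| ≤ ε p) :
    Irrational x := by
  rintro ⟨q, rfl⟩
  have hq : q.num ≠ 0 := by simpa using hx
  have hB : (0 : ℝ) < q.den := by exact_mod_cast q.den_pos
  obtain ⟨K, hK⟩ := (happrox.and <| (hε.eventually (gt_mem_nhds (inv_pos.mpr hB))).and
    (eventually_gt_atTop q.num.natAbs)).exists_forall_of_atTop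
  obtain ⟨p, hKp, hp⟩ := Nat.exists_infinite_primes K
  obtain ⟨happrox_p, hεp, hpq⟩ := hK p hKp
  obtain ⟨N, m, hpN, hNm⟩ := happrox_p hp
  set M : ℤ := N * q.num - p * (q.den * m)
  have hM : (M : ℝ) = q.den * (N * q - p * m) := by
    have hnum : (q.den : ℝ) * q = q.num := by exact_mod_cast q.den_mul_eq_num
    simp only [M]; push_cast
    linear_combination -(N : ℝ) * hnum
  have hpM : ¬ (p : ℤ) ∣ M := by
    have hpA : ¬ (p : ℤ) ∣ q.num := fun h =>
      hpq.not_ge (Nat.le_of_dvd (Int.natAbs_pos.mpr hq) (Int.natCast_dvd.mp h))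
    rw [dvd_sub_left (dvd_mul_right _ _)]
    exact (Nat.prime_iff_prime_int.mp hp).not_dvd_mul hpN hpA
  have hM1 : (1 : ℝ) ≤ |(M : ℝ)| := by
    exact_mod_cast Int.one_le_abs fun h : M = 0 => hpM (h ▸ dvd_zero _)
  have hM_lt : |(M : ℝ)| < 1 := by
    rw [hM, abs_mul, abs_of_pos hB]
    calc (q.den : ℝ) * |(N : ℝ) * q - p * m| ≤ q.den * ε p := by gcongr
      _ < q.den * (q.den : ℝ)⁻¹ := by gcongr
      _ = 1 := mul_inv_cancel₀ hB.ne'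
  linarith

theorem irrational_exp_intCast {n : ℤ} (hn : n ≠ 0) : Irrational (Real.exp n) := by
  obtain ⟨c, hc⟩ := LindemannWeierstrass.exp_polynomial_approx (X - C n) (by simpa using hn)
  refine irrational_of_prime_approx (Real.exp_pos _).ne' (tendsto_pow_div_factorial_pred_atTop c)
    ((eventually_gt_atTop (eval 0 (X - C n)).natAbs).mono fun p hpn hp => ?_)
  obtain ⟨N, hpN, g, -, hg⟩ := hc p hpn hp
  refine ⟨N, g.eval n, hpN, ?_⟩
  have hclose := hg (r := (n : ℂ)) (by rw [aroots_X_sub_C]; simp)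
  have haeval : aeval (n : ℂ) g = ((g.eval n : ℤ) : ℂ) := by
    simpa using aeval_algebraMap_apply_eq_algebraMap_eval (A := ℂ) n g
  rw [haeval, zsmul_eq_mul, nsmul_eq_mul, ← Complex.ofReal_intCast n, ← Complex.ofReal_exp] at hclose
  exact_mod_cast hclose

theorem exp_nonzero_rat_irrational (r : ℚ) (hr : r ≠ 0) :
    Irrational (Real.exp (r : ℝ)) := by
  refine .of_pow r.den ?_
  rw [← Real.exp_nat_mul, show (r.den : ℝ) * r = r.num by exact_mod_cast r.den_mul_eq_num]
  exact irrational_exp_intCast (Rat.num_ne_zero.mpr hr)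
end

section
/- For all positive integers x and y, tanh(x/y) is irrational. -/
/-!
For a nonzero integer `m`, Hermite's method (the analytic part of Lindemann–Weierstrass) gives,
for every large prime `p`, integers `n` and `g` with `p ∤ n` and `|n e^m - p g| ≤ c^p / (p - 1)!`.
If `e^m = a / b` with `p ∤ a`, then `b (n e^m - p g) = n a - p b g` is a nonzero integer, which is
impossible once `b c^p / (p - 1)! < 1`. Irrationality then passes to `e^q` for nonzero rational `q` via
`(e^q)^(den q) = e^(num q)`, and to `tanh q` via `e^(2q) = (1 + tanh q) / (1 - tanh q)`.
-/

open Polynomial Filter Topology Real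
open scoped Nat

theorem tendsto_pow_div_factorial_sub_one_atTop (c : ℝ) :
    Tendsto (fun p : ℕ ↦ c ^ p / (p - 1)!) atTop (𝓝 0) := by
  have h := ((FloorSemiring.tendsto_pow_div_factorial_atTop c).comp
    (tendsto_sub_atTop_nat 1)).const_mul c
  rw [mul_zero] at h
  refine h.congr' ((eventually_ge_atTop 1).mono fun p hp ↦ ?_)
  rw [Function.comp_apply, mul_div_assoc', ← pow_succ', Nat.sub_add_cancel hp]

theorem Int.one_le_abs_mul_sub_natCast_mul {p : ℕ} (hp : p.Prime) {a b : ℤ}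
    (ha : ¬ (p : ℤ) ∣ a) (hb : ¬ (p : ℤ) ∣ b) (g : ℤ) : 1 ≤ |a * b - p * g| :=
  Int.one_le_abs fun h ↦ (Int.Prime.dvd_mul' hp ⟨g, sub_eq_zero.1 h⟩).elim ha hb

theorem Real.exp_intCast_approx {m : ℤ} (hm : m ≠ 0) :
    ∃ c : ℝ, ∀ p > m.natAbs, p.Prime →
      ∃ n g : ℤ, ¬ (p : ℤ) ∣ n ∧ |n * exp m - p * g| ≤ c ^ p / (p - 1)! := by
  obtain ⟨c, hc⟩ := LindemannWeierstrass.exp_polynomial_approx (X - C m) (by simpa using hm)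
  refine ⟨c, fun p hpm hp ↦ ?_⟩
  obtain ⟨n, hpn, g, -, happrox⟩ := hc p (by simpa using hpm) hp
  have hroot : (m : ℂ) ∈ (X - C m).aroots ℂ := by
    rw [mem_aroots]
    exact ⟨X_sub_C_ne_zero m, by simp⟩
  have hg : aeval (m : ℂ) g = ((g.eval m : ℤ) : ℝ) := by
    simpa using aeval_algebraMap_apply_eq_algebraMap_eval (A := ℂ) m g
  refine ⟨n, g.eval m, hpn, ?_⟩
  rw [← Real.norm_eq_abs, ← Complex.norm_real]
  convert happrox hroot using 2
  rw [hg, zsmul_eq_mul, nsmul_eq_mul, ← Complex.ofReal_intCast m, ← Complex.ofReal_exp]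
  push_cast
  rfl

theorem irrational_exp_intCast_s4 {m : ℤ} (hm : m ≠ 0) : Irrational (exp m) := by
  rintro ⟨r, hr⟩
  obtain ⟨c, hc⟩ := exp_intCast_approx hm
  have hsmall : ∀ᶠ p : ℕ in atTop, (r.den : ℝ) * (c ^ p / (p - 1)!) < 1 := by
    have h := (tendsto_pow_div_factorial_sub_one_atTop c).const_mul (r.den : ℝ)
    rw [mul_zero] at h
    exact h.eventually (gt_mem_nhds one_pos)
  obtain ⟨p, hp, hsmall, hpm, hpr⟩ :=
    ((Nat.frequently_atTop_iff_infinite.2 Nat.infinite_setOfPred_prime).and_eventually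
      (hsmall.and ((eventually_gt_atTop m.natAbs).and (eventually_gt_atTop r.num.natAbs)))).exists
  obtain ⟨n, g, hpn, happrox⟩ := hc p hpm hp
  have hnum : ¬ (p : ℤ) ∣ r.num := fun h ↦ by
    have hr0 : r ≠ 0 := by
      rintro rfl
      simp [(exp_pos _).ne] at hr
    have := Int.natAbs_le_of_dvd_ne_zero h (Rat.num_ne_zero.2 hr0)
    omega
  have hden : (0 : ℝ) < r.den := by positivity
  have hclear : ((|n * r.num - p * (r.den * g)| : ℤ) : ℝ) = r.den * |n * exp m - p * g| := by
    rw [← hr, ← abs_of_pos hden, ← abs_mul, Rat.cast_def]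
    push_cast
    field_simp
  have hone := (Int.cast_le (R := ℝ)).2 (Int.one_le_abs_mul_sub_natCast_mul hp hpn hnum (r.den * g))
  rw [hclear, Int.cast_one] at hone
  exact (hone.trans (mul_le_mul_of_nonneg_left happrox hden.le)).not_gt hsmall

theorem irrational_exp_ratCast {q : ℚ} (hq : q ≠ 0) : Irrational (exp q) := by
  have h : exp q ^ q.den = exp q.num := by
    rw [← exp_nat_mul, ← Rat.cast_natCast, ← Rat.cast_mul, Rat.den_mul_eq_num, Rat.cast_intCast]
  exact (h ▸ irrational_exp_intCast_s4 (Rat.num_ne_zero.2 hq)).of_pow q.den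

theorem irrational_tanh_ratCast {q : ℚ} (hq : q ≠ 0) : Irrational (tanh q) := by
  rintro ⟨r, hr⟩
  refine irrational_exp_ratCast (mul_ne_zero two_ne_zero hq) ⟨(1 + r) / (1 - r), ?_⟩
  have hexp : exp ((2 * q : ℚ) : ℝ) = exp q ^ 2 := by
    rw [sq, ← exp_add, Rat.cast_mul, Rat.cast_ofNat, two_mul]
  rw [hexp, Rat.cast_div, Rat.cast_add, Rat.cast_sub, Rat.cast_one, hr, tanh_eq, exp_neg]
  field_simp
  ring

theorem tanh_rat_irrational (x y : ℕ) (hx : 0 < x) (hy : 0 < y) :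
    Irrational (Real.tanh ((x : ℝ) / (y : ℝ))) := by
  have hq : ((x : ℚ) / y : ℚ) ≠ 0 := by positivity
  simpa using irrational_tanh_ratCast hq
end

section
/- For all positive integers x and y, tan(x/y) is irrational. -/
/-!
Write `θ = a / b` and `I n θ = ∫_{-1}^{1} (1 - x²)ⁿ cos (x θ) dx` (Cartwright's integrals from
the irrationality proof of `π`). Integrating by parts twice gives
`θ² I (n + 2) = 2 (n + 2) (2n + 3) I (n + 1) - 4 (n + 2) (n + 1) I n`, and by induction
`a ^ (2n + 1) I n / n!` is an integer combination of `sin θ` and `cos θ`. If `tan θ = p / q`,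
then `q a ^ (2n + 1) I n / n!` is an integer multiple of `cos θ ≠ 0` that tends to `0`, so it
vanishes for large `n`. Running the recursion backwards, `I n = I (n + 1) = 0` would force
`I 0 = 0`, that is `sin θ = 0`. Both `sin θ ≠ 0` and `cos θ ≠ 0` hold because `π` is irrational.
-/

open intervalIntegral Filter Real
open scoped Nat Topology

theorem integral_deriv_deriv_mul_cos {f f' f'' : ℝ → ℝ} {a b θ : ℝ}
    (hf : ∀ x, HasDerivAt f (f' x) x) (hf' : ∀ x, HasDerivAt f' (f'' x) x)
    (hf'' : Continuous f'') :
    ∫ x in a..b, f'' x * cos (x * θ) =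
      (f' b * cos (b * θ) + θ * f b * sin (b * θ)) -
        (f' a * cos (a * θ) + θ * f a * sin (a * θ)) - θ ^ 2 * ∫ x in a..b, f x * cos (x * θ) := by
  have hfc : Continuous f := continuous_iff_continuousAt.2 fun x => (hf x).continuousAt
  have h₂ : Continuous fun x => f'' x * cos (x * θ) := by fun_prop
  have h₀ : Continuous fun x => θ ^ 2 * (f x * cos (x * θ)) := by fun_prop
  rw [eq_sub_iff_add_eq, ← integral_const_mul,
    ← integral_add (h₂.intervalIntegrable _ _) (h₀.intervalIntegrable _ _)]
  refine integral_eq_sub_of_hasDerivAt (f := fun x => f' x * cos (x * θ) + θ * f x * sin (x * θ))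
    (fun x _ => ?_) ((h₂.add h₀).intervalIntegrable _ _)
  refine (((hf' x).fun_mul (hasDerivAt_mul_const θ).cos).fun_add
    (((hf x).const_mul θ).fun_mul (hasDerivAt_mul_const θ).sin)).congr_deriv ?_
  ring

theorem hasDerivAt_one_sub_sq_pow_succ (m : ℕ) (x : ℝ) :
    HasDerivAt (fun x : ℝ => (1 - x ^ 2) ^ (m + 1)) (-2 * (m + 1) * x * (1 - x ^ 2) ^ m) x := by
  refine (((hasDerivAt_pow 2 x).const_sub 1).fun_pow (m + 1)).congr_deriv ?_
  push_cast
  ring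

noncomputable def cartwrightIntegral (n : ℕ) (θ : ℝ) : ℝ :=
  ∫ x in (-1)..1, (1 - x ^ 2) ^ n * cos (x * θ)

section

variable {θ : ℝ}

theorem cartwrightIntegral_zero_mul : cartwrightIntegral 0 θ * θ = 2 * sin θ := by
  rw [mul_comm, cartwrightIntegral]
  simp [mul_integral_comp_mul_right, two_mul]

theorem cartwrightIntegral_one_mul_sq :
    cartwrightIntegral 1 θ * θ ^ 2 = 2 * cartwrightIntegral 0 θ - 4 * cos θ := by
  have h := integral_deriv_deriv_mul_cos (a := -1) (b := 1) (θ := θ)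
    (hasDerivAt_one_sub_sq_pow_succ 0)
    (fun x => by simpa using (hasDerivAt_id x).const_mul (-2 : ℝ)) continuous_const
  simp only [cartwrightIntegral, integral_const_mul] at h ⊢
  norm_num at h ⊢
  linarith

theorem cartwrightIntegral_add_two_mul_sq (n : ℕ) :
    cartwrightIntegral (n + 2) θ * θ ^ 2 =
      2 * (n + 2) * (2 * n + 3) * cartwrightIntegral (n + 1) θ
        - 4 * (n + 2) * (n + 1) * cartwrightIntegral n θ := by
  -- `x ^ 2 = 1 - (1 - x ^ 2)` puts the second derivative of `(1 - x ^ 2) ^ (n + 2)` in this form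
  have hf' (x : ℝ) :
      HasDerivAt (fun x : ℝ => -2 * ((n + 1 : ℕ) + 1) * x * (1 - x ^ 2) ^ (n + 1))
        (-2 * (n + 2) * (2 * n + 3) * (1 - x ^ 2) ^ (n + 1) +
          4 * (n + 2) * (n + 1) * (1 - x ^ 2) ^ n) x := by
    have := ((hasDerivAt_id x).fun_mul (hasDerivAt_one_sub_sq_pow_succ n x)).const_mul
      (-2 * ((n + 1 : ℕ) + 1) : ℝ)
    simp only [id, ← mul_assoc] at this
    refine this.congr_deriv ?_
    push_cast
    ring
  have h := integral_deriv_deriv_mul_cos (a := -1) (b := 1) (θ := θ)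
    (hasDerivAt_one_sub_sq_pow_succ (n + 1)) hf' (by fun_prop)
  have e (x : ℝ) : (-2 * (n + 2) * (2 * n + 3) * (1 - x ^ 2) ^ (n + 1) +
      4 * (n + 2) * (n + 1) * (1 - x ^ 2) ^ n) * cos (x * θ) =
      -2 * (n + 2) * (2 * n + 3) * ((1 - x ^ 2) ^ (n + 1) * cos (x * θ)) +
        4 * (n + 2) * (n + 1) * ((1 - x ^ 2) ^ n * cos (x * θ)) := by ring
  simp only [e] at h
  rw [integral_add ((by fun_prop : Continuous _).intervalIntegrable _ _)
    ((by fun_prop : Continuous _).intervalIntegrable _ _), integral_const_mul,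
    integral_const_mul] at h
  simp only [cartwrightIntegral]
  norm_num at h ⊢
  linarith

theorem cartwrightIntegral_ne_zero_or_succ_ne_zero (hθ : sin θ ≠ 0) (n : ℕ) :
    cartwrightIntegral n θ ≠ 0 ∨ cartwrightIntegral (n + 1) θ ≠ 0 := by
  induction n with
  | zero =>
    refine .inl fun h => hθ ?_
    have h₀ := cartwrightIntegral_zero_mul (θ := θ)
    rw [h, zero_mul] at h₀
    linarith
  | succ n ih =>
    by_contra! h
    have hrec := cartwrightIntegral_add_two_mul_sq (θ := θ) n
    rw [h.1, h.2] at hrec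
    have hn : cartwrightIntegral n θ = 0 := by
      have : (4 * (n + 2) * (n + 1) : ℝ) * cartwrightIntegral n θ = 0 := by linarith
      exact (mul_eq_zero.1 this).resolve_left (by positivity)
    exact ih.elim (· hn) (· h.1)

theorem frequently_cartwrightIntegral_ne_zero (hθ : sin θ ≠ 0) :
    ∃ᶠ n in atTop, cartwrightIntegral n θ ≠ 0 :=
  frequently_atTop.2 fun N => (cartwrightIntegral_ne_zero_or_succ_ne_zero hθ N).elim
    (fun h => ⟨N, le_rfl, h⟩) fun h => ⟨N + 1, N.le_succ, h⟩

theorem exists_pow_mul_cartwrightIntegral_eq {a b : ℤ} (hab : (a : ℝ) = b * θ) (n : ℕ) :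
    ∃ A B : ℤ, a ^ (2 * n + 1) * cartwrightIntegral n θ = n ! * (A * sin θ + B * cos θ) := by
  induction n using Nat.twoStepInduction with
  | zero =>
    refine ⟨2 * b, 0, ?_⟩
    push_cast
    linear_combination b * cartwrightIntegral_zero_mul (θ := θ) + cartwrightIntegral 0 θ * hab
  | one =>
    refine ⟨4 * b ^ 3, -4 * a * b ^ 2, ?_⟩
    push_cast
    linear_combination (a ^ 2 + a * b * θ + b ^ 2 * θ ^ 2) * cartwrightIntegral 1 θ * hab +
      b ^ 3 * θ * cartwrightIntegral_one_mul_sq (θ := θ) +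
      2 * b ^ 3 * cartwrightIntegral_zero_mul (θ := θ) + 4 * b ^ 2 * cos θ * hab
  | more n ih₀ ih₁ =>
    obtain ⟨A₀, B₀, h₀⟩ := ih₀
    obtain ⟨A₁, B₁, h₁⟩ := ih₁
    refine ⟨b ^ 2 * (2 * (2 * n + 3) * A₁ - 4 * a ^ 2 * A₀),
      b ^ 2 * (2 * (2 * n + 3) * B₁ - 4 * a ^ 2 * B₀), ?_⟩
    push_cast [Nat.factorial_succ] at h₁ ⊢
    linear_combination a ^ (2 * n + 3) * (a + b * θ) * cartwrightIntegral (n + 2) θ * hab +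
      a ^ (2 * n + 3) * b ^ 2 * cartwrightIntegral_add_two_mul_sq (θ := θ) n +
      2 * (n + 2) * (2 * n + 3) * b ^ 2 * h₁ - 4 * (n + 2) * (n + 1) * a ^ 2 * b ^ 2 * h₀

end

theorem abs_cartwrightIntegral_le (n : ℕ) (θ : ℝ) : |cartwrightIntegral n θ| ≤ 2 := by
  rw [← Real.norm_eq_abs]
  refine (norm_integral_le_of_norm_le_const fun x hx => ?_).trans
    (by norm_num : (1 : ℝ) * |1 - -1| ≤ 2)
  rw [Set.uIoc_of_le (by norm_num), Set.mem_Ioc] at hx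
  rw [norm_mul, norm_pow]
  refine mul_le_one₀ (pow_le_one₀ (norm_nonneg _) ?_) (norm_nonneg _) (abs_cos_le_one _)
  rw [Real.norm_eq_abs, abs_le]
  constructor <;> nlinarith

theorem tendsto_pow_mul_cartwrightIntegral_div_factorial (a θ : ℝ) :
    Tendsto (fun n : ℕ => a ^ (2 * n + 1) * cartwrightIntegral n θ / n !) atTop (𝓝 0) := by
  have hlim : Tendsto (fun n : ℕ => 2 * |a| * (a ^ 2) ^ n / n !) atTop (𝓝 0) := by
    simpa [mul_div_assoc] using
      (FloorSemiring.tendsto_pow_div_factorial_atTop (a ^ 2)).const_mul (2 * |a|)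
  refine squeeze_zero_norm (fun n => ?_) hlim
  rw [norm_div, norm_mul, norm_pow, Real.norm_eq_abs, Real.norm_eq_abs, Real.norm_natCast, pow_succ,
    pow_mul, sq_abs]
  calc (a ^ 2) ^ n * |a| * |cartwrightIntegral n θ| / n !
      ≤ (a ^ 2) ^ n * |a| * 2 / n ! := by gcongr; exact abs_cartwrightIntegral_le n θ
    _ = 2 * |a| * (a ^ 2) ^ n / n ! := by ring

theorem eventually_eq_zero_of_tendsto_zero_of_forall_int_mul {α : Type*} {l : Filter α}
    {u : α → ℝ} {c : ℝ} (hc : c ≠ 0) (hu : Tendsto u l (𝓝 0)) (hz : ∀ i, ∃ z : ℤ, u i = z * c) :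
    ∀ᶠ i in l, u i = 0 := by
  filter_upwards [hu.eventually (Metric.ball_mem_nhds 0 (abs_pos.2 hc))] with i hi
  obtain ⟨z, hz⟩ := hz i
  rw [dist_zero_right, hz, norm_mul, Real.norm_eq_abs, Real.norm_eq_abs] at hi
  rcases eq_or_ne z 0 with rfl | hz0
  · simpa using hz
  · have : (1 : ℝ) ≤ |(z : ℝ)| := by exact_mod_cast Int.one_le_abs hz0
    nlinarith [abs_nonneg c]

theorem sin_ratCast_ne_zero {r : ℚ} (hr : r ≠ 0) : sin r ≠ 0 := by
  rw [Ne, sin_eq_zero_iff]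
  rintro ⟨k, hk⟩
  have hk0 : k ≠ 0 := by
    rintro rfl
    exact hr (by exact_mod_cast (by simpa using hk : (0 : ℝ) = r).symm)
  exact (irrational_pi.intCast_mul hk0).ne_rat r hk

theorem irrational_tan_ratCast {r : ℚ} (hr : r ≠ 0) : Irrational (tan r) := by
  have hsin := sin_ratCast_ne_zero hr
  have hcos : cos r ≠ 0 := fun h => sin_ratCast_ne_zero (mul_ne_zero two_ne_zero hr) <| by
    rw [Rat.cast_mul, Rat.cast_ofNat, sin_two_mul, h, mul_zero]
  rintro ⟨s, hs⟩
  have hsc : (s.den : ℝ) * sin r = s.num * cos r := by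
    rw [tan_eq_sin_div_cos, Rat.cast_def, div_eq_div_iff (by positivity) hcos] at hs
    linarith
  have hab : (r.num : ℝ) = r.den * r := by
    rw [Rat.cast_def]
    field_simp
  have hmul (n : ℕ) : ∃ z : ℤ,
      s.den * (r.num ^ (2 * n + 1) * cartwrightIntegral n r / n !) = z * cos r := by
    obtain ⟨A, B, h⟩ := exists_pow_mul_cartwrightIntegral_eq hab n
    refine ⟨A * s.num + B * s.den, ?_⟩
    rw [h, mul_div_cancel_left₀ _ (by positivity)]
    push_cast
    linear_combination A * hsc
  have hlim := (tendsto_pow_mul_cartwrightIntegral_div_factorial r.num r).const_mul (s.den : ℝ)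
  rw [mul_zero] at hlim
  have hzero := eventually_eq_zero_of_tendsto_zero_of_forall_int_mul hcos hlim hmul
  obtain ⟨n, hn, hI⟩ := (hzero.and_frequently (frequently_cartwrightIntegral_ne_zero hsin)).exists
  simp [hI, Rat.num_ne_zero.2 hr, s.den_ne_zero, n.factorial_ne_zero] at hn

theorem tan_rat_irrational (x y : ℕ) (hx : 0 < x) (hy : 0 < y) :
    Irrational (Real.tan ((x : ℝ) / (y : ℝ))) := by
  have hxy : ((x : ℝ) / y) = ((x / y : ℚ) : ℝ) := by push_cast; rfl
  rw [hxy]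
  exact irrational_tan_ratCast (by positivity)
end

section
/- For every nonzero rational number r, tan(r) is irrational. -/
/-!
If `tan r = q` were rational, `e^{2ir} = (1 + iq) / (1 - iq)` would lie in `ℚ(i)`: there would be
Gaussian integers `β ≠ 0` and `γ` with `β e^α = γ`, where `α = 2ir = ω / b` for a Gaussian integer
`ω ≠ 0`. Hermite's approximations of the exponential (the analytic half of Lindemann–Weierstrass)
give, for arbitrarily large primes `p`, an integer `n` prime to `p` and a Gaussian integer `w` with
`n e^α - p w` as small as we like. Then `n γ - p β w` is a Gaussian integer of norm less than one,
hence zero, so `p ∣ n γ`; for `p` larger than the coordinates of `γ` this forces `γ = 0`.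
-/

namespace GaussianInt

open Complex Polynomial
open scoped Nat

theorem eq_zero_of_norm_toComplex_lt_one {z : GaussianInt} (hz : ‖(z : ℂ)‖ < 1) : z = 0 := by
  have hnorm : (z.norm : ℝ) < 1 := by
    rw [intCast_real_norm, normSq_eq_norm_sq]
    nlinarith [_root_.norm_nonneg (z : ℂ)]
  refine norm_eq_zero.1 (le_antisymm ?_ z.norm_nonneg)
  exact Int.lt_add_one_iff.1 (by exact_mod_cast hnorm)

theorem eq_zero_of_prime_dvd_intCast_mul {p : ℕ} (hp : p.Prime) {m : ℤ} {γ : GaussianInt}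
    (hdvd : (p : GaussianInt) ∣ m * γ) (hm : ¬ (p : ℤ) ∣ m) (hre : γ.re.natAbs < p)
    (him : γ.im.natAbs < p) : γ = 0 := by
  have hpZ : Prime (p : ℤ) := Nat.prime_iff_prime_int.1 hp
  rw [← Int.cast_natCast, Zsqrtd.intCast_dvd, Zsqrtd.re_smul, Zsqrtd.im_smul] at hdvd
  ext
  · exact Int.eq_zero_of_abs_lt_dvd ((hpZ.dvd_or_dvd hdvd.1).resolve_left hm)
      (by rw [Int.abs_eq_natAbs]; omega)
  · exact Int.eq_zero_of_abs_lt_dvd ((hpZ.dvd_or_dvd hdvd.2).resolve_left hm)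
      (by rw [Int.abs_eq_natAbs]; omega)

theorem exists_eq_pow_mul_aeval_div (ω : GaussianInt) {b : ℕ} (hb : b ≠ 0) {g : ℤ[X]} {k : ℕ}
    (hg : g.natDegree ≤ k) : ∃ w : GaussianInt, (b : ℂ) ^ k * aeval ((ω : ℂ) / b) g = w := by
  refine ⟨(b : GaussianInt) ^ (k - g.natDegree) * aeval ω (g.scaleRoots b), ?_⟩
  have hscale := scaleRoots_eval₂_mul (p := g) (Int.castRingHom ℂ) ((ω : ℂ) / b) (b : ℤ)
  rw [eq_intCast, Int.cast_natCast, mul_div_cancel₀ _ (Nat.cast_ne_zero.2 hb)] at hscale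
  rw [map_mul, map_pow, map_natCast, aeval_def, aeval_def, hom_eval₂,
    RingHom.ext_int (toComplex.comp (algebraMap ℤ GaussianInt)) (algebraMap ℤ ℂ),
    algebraMap_int_eq, hscale, ← mul_assoc, ← pow_add, Nat.sub_add_cancel hg]

theorem exists_natDegree_le_two_mem_aroots_div (ω : GaussianInt) (hω : ω ≠ 0) {b : ℕ}
    (hb : b ≠ 0) : ∃ f : ℤ[X], f.eval 0 ≠ 0 ∧ f.natDegree ≤ 2 ∧ (ω : ℂ) / b ∈ f.aroots ℂ := by
  -- `(b X - ω) (b X - conj ω)`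
  let f : ℤ[X] := C ((b : ℤ) ^ 2) * X ^ 2 - C (2 * b * ω.re) * X + C ω.norm
  have hf0 : f.eval 0 ≠ 0 := by simpa [f] using norm_eq_zero.not.2 hω
  refine ⟨f, hf0, by simp only [f]; compute_degree, ?_⟩
  refine mem_aroots.2 ⟨fun h ↦ hf0 (by rw [h, eval_zero]), ?_⟩
  have hb' : (b : ℂ) ≠ 0 := Nat.cast_ne_zero.2 hb
  simp only [f, map_add, map_sub, map_mul, map_pow, map_natCast, map_intCast, map_ofNat,
    aeval_X, eq_intCast, Zsqrtd.norm_def, toComplex_def]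
  push_cast
  field_simp
  linear_combination (ω.im : ℂ) ^ 2 * I_sq

open Filter in
theorem exists_int_mul_cexp_sub_prime_mul_lt (ω : GaussianInt) (hω : ω ≠ 0) {b : ℕ} (hb : b ≠ 0)
    {ε : ℝ} (hε : 0 < ε) (M : ℕ) :
    ∃ p > M, p.Prime ∧ ∃ n : ℤ, ¬ (p : ℤ) ∣ n ∧
      ∃ w : GaussianInt, ‖n * cexp (ω / b) - p * w‖ < ε := by
  obtain ⟨f, hf0, hfdeg, hfα⟩ := exists_natDegree_le_two_mem_aroots_div ω hω hb
  obtain ⟨c, hc⟩ := LindemannWeierstrass.exp_polynomial_approx f hf0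
  obtain ⟨N, hN⟩ := eventually_atTop.1
    (FloorSemiring.eventually_mul_pow_lt_factorial_sub ε⁻¹ ((b : ℝ) ^ 2 * c) 1)
  obtain ⟨p, hpge, hp⟩ := Nat.exists_infinite_primes (M + N + b + (f.eval 0).natAbs + 1)
  obtain ⟨n, hpn, g, hg, happrox⟩ := hc p (by omega) hp
  -- Clearing the denominator `b ^ (2 * p)` of `g (ω / b)` keeps `n` prime to `p` since `b < p`.
  obtain ⟨w, hw⟩ := exists_eq_pow_mul_aeval_div ω hb (k := 2 * p)
    (hg.trans ((Nat.sub_le _ _).trans (by nlinarith)))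
  refine ⟨p, by omega, hp, n * b ^ (2 * p), ?_, w, ?_⟩
  · have hpZ : Prime (p : ℤ) := Nat.prime_iff_prime_int.1 hp
    rintro hdvd
    rcases hpZ.dvd_or_dvd hdvd with h | h
    · exact hpn h
    · have := Int.le_of_dvd (by positivity) (hpZ.dvd_of_dvd_pow h)
      omega
  specialize happrox hfα
  simp only [zsmul_eq_mul, nsmul_eq_mul] at happrox
  have hfact := hN p (by omega)
  rw [mul_pow, ← pow_mul, inv_mul_lt_iff₀ hε] at hfact
  calc ‖((n * b ^ (2 * p) : ℤ) : ℂ) * cexp (ω / b) - p * w‖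
      = (b : ℝ) ^ (2 * p) * ‖n * cexp (ω / b) - p * aeval ((ω : ℂ) / b) g‖ := by
        rw [← hw]
        push_cast
        rw [← norm_natCast, ← norm_pow, ← norm_mul]
        ring_nf
    _ ≤ (b : ℝ) ^ (2 * p) * (c ^ p / (p - 1)!) := by gcongr
    _ < ε := by
        rw [← mul_div_assoc, div_lt_iff₀ (by positivity)]
        linarith

theorem mul_cexp_div_ne (ω β γ : GaussianInt) (hω : ω ≠ 0) {b : ℕ} (hb : b ≠ 0) (hβ : β ≠ 0) :
    (β : ℂ) * cexp (ω / b) ≠ γ := by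
  intro h
  have hβ' : 0 < ‖(β : ℂ)‖ := norm_pos_iff.2 (toComplex_eq_zero.not.2 hβ)
  have hγ : γ ≠ 0 := by
    rintro rfl
    exact mul_ne_zero (toComplex_eq_zero.not.2 hβ) (exp_ne_zero _) (h.trans toComplex_zero)
  obtain ⟨p, hpγ, hp, n, hpn, w, hclose⟩ := exists_int_mul_cexp_sub_prime_mul_lt ω hω hb
    (inv_pos.2 hβ') (γ.re.natAbs + γ.im.natAbs)
  have hzero : n * γ - p * β * w = 0 := by
    refine eq_zero_of_norm_toComplex_lt_one ?_
    calc ‖((n * γ - p * β * w : GaussianInt) : ℂ)‖ = ‖(β : ℂ)‖ * ‖n * cexp (ω / b) - p * w‖ := by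
          rw [← norm_mul]
          simp only [map_sub, map_mul, map_intCast, map_natCast, ← h]
          ring_nf
      _ < ‖(β : ℂ)‖ * ‖(β : ℂ)‖⁻¹ := mul_lt_mul_of_pos_left hclose hβ'
      _ = 1 := mul_inv_cancel₀ hβ'.ne'
  exact hγ (eq_zero_of_prime_dvd_intCast_mul hp ⟨β * w, by linear_combination hzero⟩ hpn
    (by omega) (by omega))

end GaussianInt

open Complex in
theorem eq_zero_of_int_mul_sin_add_int_mul_cos_eq_zero {r : ℚ} (hr : r ≠ 0) {c d : ℤ}
    (h : c * Real.sin r + d * Real.cos r = 0) : c = 0 ∧ d = 0 := by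
  by_contra hcd
  have hrel : (c : ℂ) * sin r + d * cos r = 0 := by
    have := congrArg ((↑) : ℝ → ℂ) h
    push_cast at this
    exact this
  -- `(d - i c) e^{2ir} = -(d + i c)`
  refine GaussianInt.mul_cexp_div_ne ⟨0, 2 * r.num⟩ ⟨d, -c⟩ ⟨-d, -c⟩ ?_ r.den_nz ?_ ?_
  · simpa [Zsqrtd.ext_iff] using hr
  · simp only [ne_eq, Zsqrtd.ext_iff, Zsqrtd.re_zero, Zsqrtd.im_zero, neg_eq_zero]
    tauto
  · have hα : ((⟨0, 2 * r.num⟩ : GaussianInt) : ℂ) / r.den = r * I + r * I := by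
      rw [GaussianInt.toComplex_def', Rat.cast_def]
      push_cast
      ring
    rw [hα, exp_add, exp_mul_I, GaussianInt.toComplex_def', GaussianInt.toComplex_def']
    push_cast
    linear_combination (2 * (cos r + I * sin r)) * hrel - (d + I * c) * sin_sq_add_cos_sq (r : ℂ)
      + (d * sin r ^ 2 - 2 * c * cos r * sin r - I * c * sin r ^ 2) * I_sq

theorem tan_nonzero_rat_irrational (r : ℚ) (hr : r ≠ 0) :
    Irrational (Real.tan (r : ℝ)) := by
  rintro ⟨q, hq⟩
  by_cases hcos : Real.cos r = 0
  -- here `Real.tan r = 0` is a junk value, so refute `cos r = 0` itself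
  · have := eq_zero_of_int_mul_sin_add_int_mul_cos_eq_zero hr (c := 0) (d := 1) (by simp [hcos])
    exact one_ne_zero this.2
  · rw [Real.tan_eq_sin_div_cos, eq_div_iff hcos] at hq
    have hden : (q.den : ℝ) * q = q.num := by exact_mod_cast Rat.den_mul_eq_num q
    have hrel : ((q.den : ℤ) : ℝ) * Real.sin r + ((-q.num : ℤ) : ℝ) * Real.cos r = 0 := by
      push_cast
      linear_combination (q.den : ℝ) * hq.symm + Real.cos r * hden
    exact q.den_nz (by exact_mod_cast (eq_zero_of_int_mul_sin_add_int_mul_cos_eq_zero hr hrel).1)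
end

section
/- e^2 is irrational. -/
/-!
If `e ^ 2 = a / b` then `b e = a e⁻¹`. Truncate both exponential series after the term of
degree `n = 2k` and multiply by `n !`: the partial sums become integers, so
`n ! (b R₁ - a R₋₁)` is an integer, where `R_{±1}` are the remainders. Since `R₁ > 0` and,
the series at `-1` being alternating, `R₋₁ ≤ 0`, this integer is positive; but both
remainders are `O(1 / (n · n!))`, so it is less than `1` once `n ≥ 2(a + b)`.
-/

open Finset Real Nat Filter Topology

theorem exists_int_eq_factorial_mul_sum_range (x : ℤ) (n : ℕ) :
    ∃ z : ℤ, (n ! : ℝ) * ∑ i ∈ range (n + 1), (x : ℝ) ^ i / i ! = z := by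
  refine ⟨∑ i ∈ range (n + 1), x ^ i * (n ! / i ! : ℕ), ?_⟩
  simp only [Int.cast_sum, Int.cast_mul, Int.cast_pow, Int.cast_natCast, mul_sum]
  refine sum_congr rfl fun i hi ↦ ?_
  rw [Nat.cast_div (factorial_dvd_factorial (mem_range_succ_iff.mp hi)) (by positivity)]
  field_simp

namespace Real

theorem sum_range_lt_exp {x : ℝ} (hx : 0 < x) (n : ℕ) :
    ∑ i ∈ range n, x ^ i / i ! < exp x :=
  calc ∑ i ∈ range n, x ^ i / i !
      < ∑ i ∈ range n, x ^ i / i ! + x ^ n / n ! := lt_add_of_pos_right _ (by positivity)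
    _ = ∑ i ∈ range (n + 1), x ^ i / i ! := (sum_range_succ _ n).symm
    _ ≤ exp x := sum_le_exp_of_nonneg hx.le _

theorem exp_neg_le_sum_range_odd {x : ℝ} (hx₀ : 0 ≤ x) (hx₁ : x ≤ 1) (k : ℕ) :
    exp (-x) ≤ ∑ i ∈ range (2 * k + 1), (-x) ^ i / i ! := by
  have hterm (i : ℕ) : (-x) ^ i / i ! = (-1) ^ i * (x ^ i / i !) := by
    rw [neg_pow, mul_div_assoc]
  have hanti : Antitone fun i : ℕ ↦ x ^ i / i ! := by
    refine antitone_nat_of_succ_le fun i ↦ ?_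
    rw [pow_succ, factorial_succ, cast_mul, mul_comm ((i + 1 : ℕ) : ℝ),
      ← div_mul_div_comm (x ^ i)]
    exact mul_le_of_le_one_right (by positivity)
      (div_le_one_of_le₀ (by push_cast; linarith) (by positivity))
  have hlim :
      Tendsto (fun n ↦ ∑ i ∈ range n, (-1) ^ i * (x ^ i / i !)) atTop (𝓝 (exp (-x))) := by
    simp_rw [← hterm, exp_eq_exp_ℝ]
    exact (NormedSpace.expSeries_div_hasSum_exp (-x)).tendsto_sum_nat
  simp_rw [hterm]
  exact hanti.tendsto_le_alternating_series hlim k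

theorem factorial_mul_abs_exp_sub_sum_le {x : ℝ} (hx : |x| ≤ 1) (n : ℕ) :
    n ! * |exp x - ∑ i ∈ range (n + 1), x ^ i / i !| ≤ (n + 2) / (n + 1) ^ 2 := by
  have h := exp_bound hx n.succ_pos
  have hpow : |x| ^ (n + 1) ≤ 1 := pow_le_one₀ (abs_nonneg x) hx
  calc n ! * |exp x - ∑ i ∈ range (n + 1), x ^ i / i !|
      ≤ n ! * (|x| ^ (n + 1) * ((n + 2) / ((n + 1) ! * (n + 1)))) := by
        gcongr; exact_mod_cast h
    _ ≤ n ! * ((n + 2) / ((n + 1) ! * (n + 1))) := by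
        gcongr; exact mul_le_of_le_one_left (by positivity) hpow
    _ = (n + 2) / (n + 1) ^ 2 := by
        rw [factorial_succ]; push_cast; field_simp

theorem int_mul_exp_one_ne_int_mul_exp_neg_one {a b : ℤ} (ha : 0 ≤ a) (hb : 0 < b) :
    b * exp 1 ≠ a * exp (-1) := by
  intro hab
  have ha' : (0 : ℝ) ≤ a := by exact_mod_cast ha
  have hb' : (0 : ℝ) < b := by exact_mod_cast hb
  obtain ⟨k, hk⟩ := exists_nat_ge ((a : ℝ) + b)
  set n := 2 * k
  set R := exp 1 - ∑ i ∈ range (n + 1), (1 : ℝ) ^ i / (i ! : ℝ)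
  set R' := exp (-1) - ∑ i ∈ range (n + 1), (-1 : ℝ) ^ i / (i ! : ℝ)
  obtain ⟨S, hS⟩ := exists_int_eq_factorial_mul_sum_range 1 n
  obtain ⟨T, hT⟩ := exists_int_eq_factorial_mul_sum_range (-1) n
  push_cast at hS hT
  have hz : ((b * S - a * T : ℤ) : ℝ) = n ! * (a * R' - b * R) := by
    push_cast
    rw [← hS, ← hT]
    linear_combination (n ! : ℝ) * hab
  have hR : 0 < R := sub_pos.mpr (sum_range_lt_exp one_pos _)
  have hR' : R' ≤ 0 := sub_nonpos.mpr (exp_neg_le_sum_range_odd zero_le_one le_rfl k)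
  have hRle : n ! * R ≤ (n + 2) / (n + 1) ^ 2 := by
    rw [← abs_of_pos hR]
    exact factorial_mul_abs_exp_sub_sum_le (by norm_num) n
  have hR'le : n ! * -R' ≤ (n + 2) / (n + 1) ^ 2 := by
    rw [← abs_of_nonpos hR']
    exact factorial_mul_abs_exp_sub_sum_le (by norm_num) n
  have hsmall : ((a : ℝ) + b) * ((n + 2) / (n + 1) ^ 2) < 1 := by
    have hn : (n : ℝ) = 2 * k := by push_cast [n]; ring
    rw [← mul_div_assoc, div_lt_one (by positivity), hn]
    nlinarith
  have hneg : b * S - a * T < 0 := by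
    suffices ((b * S - a * T : ℤ) : ℝ) < 0 by exact_mod_cast this
    rw [hz]
    have : (a : ℝ) * R' ≤ 0 := mul_nonpos_of_nonneg_of_nonpos ha' hR'
    have : (0 : ℝ) < n ! := by positivity
    nlinarith [mul_pos hb' hR]
  have hgt : -1 < b * S - a * T := by
    suffices -1 < ((b * S - a * T : ℤ) : ℝ) by exact_mod_cast this
    rw [hz]
    nlinarith [mul_le_mul_of_nonneg_left hRle hb'.le, mul_le_mul_of_nonneg_left hR'le ha']
  omega

end Real

theorem e_sq_irrational : Irrational (Real.exp 1 ^ 2) := by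
  rintro ⟨q, hq⟩
  have hq₀ : (0 : ℝ) < q := hq ▸ by positivity
  have hnum : 0 < q.num := Rat.num_pos.mpr (by exact_mod_cast hq₀)
  refine int_mul_exp_one_ne_int_mul_exp_neg_one hnum.le (Int.natCast_pos.mpr q.pos) ?_
  calc (q.den : ℝ) * exp 1 = q.den * exp 1 ^ 2 * exp (-1) := by
        rw [sq, mul_assoc, mul_assoc, ← exp_add]; norm_num
    _ = q.num * exp (-1) := by rw [← hq, Rat.cast_def]; field_simp
end

section
/- The square root of e is irrational, i.e., exp(1/2) is irrational. -/
open scoped Nat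

private lemma summable_e : Summable (fun n : ℕ => (1:ℝ)/n !) := by
  simpa using Real.summable_pow_div_factorial 1

private lemma exp_one_eq (n : ℕ) :
    Real.exp 1 = (∑ k ∈ Finset.range (n+1), (1:ℝ)/k !)
      + ∑' k : ℕ, (1:ℝ)/(k + (n+1))! := by
  rw [Summable.sum_add_tsum_nat_add (n+1) summable_e]
  rw [Real.exp_eq_exp_ℝ, NormedSpace.exp_eq_tsum_div]
  simp [one_div]

private lemma tail_pos (n : ℕ) : 0 < ∑' k : ℕ, (1:ℝ)/(k + (n+1))! := by
  have hs : Summable (fun k : ℕ => (1:ℝ)/(k + (n+1))!) :=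
    (summable_nat_add_iff (f := fun n : ℕ => (1:ℝ)/n !) (n+1)).2 summable_e
  refine Summable.tsum_pos hs (fun i => by positivity) 0 (by positivity)

private lemma tail_lt (n : ℕ) (hn : 1 ≤ n) :
    (n ! : ℝ) * (∑' k : ℕ, (1:ℝ)/(k + (n+1))!) < 1 := by
  have hs : Summable (fun k : ℕ => (1:ℝ)/(k + (n+1))!) :=
    (summable_nat_add_iff (f := fun n : ℕ => (1:ℝ)/n !) (n+1)).2 summable_e
  have hn0 : (0:ℝ) ≤ (n:ℝ) := Nat.cast_nonneg n
  have hr : (1:ℝ)/((n:ℝ)+2) < 1 := by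
    rw [div_lt_one (by positivity)]; linarith
  have hr0 : (0:ℝ) ≤ 1/((n:ℝ)+2) := by positivity
  have hgs : Summable (fun k : ℕ => (1:ℝ)/(n+1)! * (1/((n:ℝ)+2))^k) :=
    (summable_geometric_of_lt_one hr0 hr).mul_left _
  have hterm : ∀ k : ℕ, (1:ℝ)/(k + (n+1))! ≤ (1:ℝ)/(n+1)! * (1/((n:ℝ)+2))^k := by
    intro k
    have h := @Nat.factorial_mul_pow_le_factorial (n+1) k
    have h' : (((n+1)! : ℝ)) * ((n:ℝ)+2)^k ≤ ((k + (n+1))! : ℝ) := by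
      rw [add_comm k (n+1)]
      have : ((n:ℝ)+2) = ((n+2 : ℕ) : ℝ) := by push_cast; ring
      rw [this]
      exact_mod_cast (by simpa using h)
    have h2 : (0:ℝ) < ((n+1)! : ℝ) * ((n:ℝ)+2)^k := by positivity
    calc (1:ℝ)/(k + (n+1))! ≤ 1/(((n+1)! : ℝ) * ((n:ℝ)+2)^k) :=
          one_div_le_one_div_of_le h2 h'
      _ = (1:ℝ)/(n+1)! * (1/((n:ℝ)+2))^k := by
          rw [div_pow, one_pow]; ring
  have hle : (∑' k : ℕ, (1:ℝ)/(k + (n+1))!)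
      ≤ ∑' k : ℕ, (1:ℝ)/(n+1)! * (1/((n:ℝ)+2))^k := Summable.tsum_le_tsum hterm hs hgs
  have h1 : ((n:ℝ)+1) ≠ 0 := by positivity
  have h2 : ((n:ℝ)+2) ≠ 0 := by positivity
  have h3 : (1:ℝ) - 1/((n:ℝ)+2) ≠ 0 := by
    have : (1:ℝ) - 1/((n:ℝ)+2) = ((n:ℝ)+1)/((n:ℝ)+2) := by field_simp; ring
    rw [this]; positivity
  have hgeo : (∑' k : ℕ, (1:ℝ)/(n+1)! * (1/((n:ℝ)+2))^k)
      = (1:ℝ)/(n+1)! * (((n:ℝ)+2)/((n:ℝ)+1)) := by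
    rw [tsum_mul_left, tsum_geometric_of_lt_one hr0 hr]
    congr 1
    have hA : (1:ℝ) - 1/((n:ℝ)+2) = ((n:ℝ)+1)/((n:ℝ)+2) := by field_simp; ring
    rw [hA, inv_div]
  have key : (n ! : ℝ) * (∑' k : ℕ, (1:ℝ)/(k + (n+1))!)
      ≤ (n ! : ℝ) * ((1:ℝ)/(n+1)! * (((n:ℝ)+2)/((n:ℝ)+1))) := by
    rw [← hgeo]
    exact mul_le_mul_of_nonneg_left hle (by positivity)
  refine lt_of_le_of_lt key ?_
  have hfac : ((n+1)! : ℝ) = ((n:ℝ)+1) * (n ! : ℝ) := by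
    push_cast [Nat.factorial_succ]; ring
  have hfne : (n ! : ℝ) ≠ 0 := by positivity
  have hE : (n ! : ℝ) * ((1:ℝ)/(n+1)! * (((n:ℝ)+2)/((n:ℝ)+1)))
      = ((n:ℝ)+2)/(((n:ℝ)+1)^2) := by
    rw [hfac]; field_simp
  rw [hE, div_lt_one (by positivity)]
  have h1' : (1:ℝ) ≤ (n:ℝ) := by exact_mod_cast hn
  nlinarith

private lemma irr_exp_one : Irrational (Real.exp 1) := by
  rintro ⟨q, hq⟩
  set n := q.den with hn
  have hnpos : 1 ≤ n := q.pos
  obtain ⟨c, hc⟩ : (q.den : ℕ) ∣ n ! := Nat.dvd_factorial q.pos le_rfl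
  -- n! * exp 1 is an integer
  have hz : ((c * q.num : ℤ) : ℝ) = (n ! : ℝ) * Real.exp 1 := by
    have hq' : (q.den : ℚ) * q = q.num := by
      rw [mul_comm]; exact Rat.mul_den_eq_num q
    have hzq : ((c * q.num : ℤ) : ℚ) = (n ! : ℚ) * q := by
      rw [hn, hc]
      push_cast
      linear_combination (-(c : ℚ)) * hq'
    rw [← hq]
    have h0 : ((n ! : ℚ) : ℝ) = (n ! : ℝ) := by push_cast; ring
    rw [← h0, ← Rat.cast_mul, ← hzq]
    push_cast
    ring
  -- n! * partial sum is an integer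
  have hm : ∀ k ∈ Finset.range (n+1), (n ! : ℝ) * ((1:ℝ)/k !) = ((n ! / k ! : ℕ) : ℝ) := by
    intro k hk
    have hdvd : k ! ∣ n ! := Nat.factorial_dvd_factorial (by
      simpa using Nat.lt_succ_iff.mp (Finset.mem_range.mp hk))
    rw [Nat.cast_div hdvd (by positivity)]
    ring
  have hsum : (n ! : ℝ) * (∑ k ∈ Finset.range (n+1), (1:ℝ)/k !)
      = ((∑ k ∈ Finset.range (n+1), (n ! / k !) : ℕ) : ℝ) := by
    rw [Finset.mul_sum, Nat.cast_sum]
    exact Finset.sum_congr rfl hm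
  set m : ℕ := ∑ k ∈ Finset.range (n+1), (n ! / k !) with hmdef
  have key : ((c * q.num - m : ℤ) : ℝ) = (n ! : ℝ) * (∑' k : ℕ, (1:ℝ)/(k + (n+1))!) := by
    rw [Int.cast_sub, hz, exp_one_eq n, Int.cast_natCast, ← hsum]
    ring
  have h0 : (0:ℝ) < ((c * q.num - m : ℤ) : ℝ) := by
    rw [key]
    exact mul_pos (by positivity) (tail_pos n)
  have h1 : ((c * q.num - m : ℤ) : ℝ) < 1 := by
    rw [key]; exact tail_lt n hnpos
  have h0' : 0 < (c : ℤ) * q.num - m := by exact_mod_cast h0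
  have h1' : (c : ℤ) * q.num - m < 1 := by exact_mod_cast h1
  omega

theorem sqrt_e_irrational : Irrational (Real.exp (1 / 2)) := by
  rintro ⟨q, hq⟩
  refine irr_exp_one ⟨q * q, ?_⟩
  push_cast
  rw [hq, ← Real.exp_add]
  norm_num
end

section
/- Let (a_i) and (b_i) be sequences of positive integers such that b_i < a_i for all i ≥ some index n. Then the infinite generalized continued fraction b_1/(a_1 + b_2/(a_2 + b_3/(a_3 + ...))) converges to an irrational number. -/
/-- Auxiliary integer sequence satisfying the three-term recurrence. -/
private def gcfRec (a b : ℕ → ℤ) (x0 x1 : ℤ) : ℕ → ℤ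
  | 0 => x0
  | 1 => x1
  | (k+2) => a (k+2) * gcfRec a b x0 x1 (k+1) + b (k+2) * gcfRec a b x0 x1 k

/-- Legendre's irrationality criterion for generalized continued fractions.
The convergents are `p k / q k`, where `p` and `q` satisfy the standard
three-term recurrences with partial numerators `b` and partial denominators `a`
(indexed from 1). -/
theorem legendre_gcf_irrational (a b : ℕ → ℤ)
    (ha : ∀ i, 1 ≤ i → 0 < a i) (hb : ∀ i, 1 ≤ i → 0 < b i)
    (n : ℕ) (hlt : ∀ i, n ≤ i → b i < a i)
    (p q : ℕ → ℝ)
    (hp0 : p 0 = 0) (hp1 : p 1 = (b 1 : ℝ))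
    (hq0 : q 0 = 1) (hq1 : q 1 = (a 1 : ℝ))
    (hp : ∀ k, 2 ≤ k → p k = (a k : ℝ) * p (k - 1) + (b k : ℝ) * p (k - 2))
    (hq : ∀ k, 2 ≤ k → q k = (a k : ℝ) * q (k - 1) + (b k : ℝ) * q (k - 2)) :
    ∃ L : ℝ, Filter.Tendsto (fun k => p k / q k) Filter.atTop (nhds L) ∧
      Irrational L := by
  -- restated recurrences
  have hp2 : ∀ k, p (k+2) = (a (k+2) : ℝ) * p (k+1) + (b (k+2) : ℝ) * p k := by
    intro k
    have h := hp (k+2) (by omega)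
    have e1 : k + 2 - 1 = k + 1 := by omega
    have e2 : k + 2 - 2 = k := by omega
    rwa [e1, e2] at h
  have hq2 : ∀ k, q (k+2) = (a (k+2) : ℝ) * q (k+1) + (b (k+2) : ℝ) * q k := by
    intro k
    have h := hq (k+2) (by omega)
    have e1 : k + 2 - 1 = k + 1 := by omega
    have e2 : k + 2 - 2 = k := by omega
    rwa [e1, e2] at h
  -- cast positivity
  have ha' : ∀ i, 1 ≤ i → (1:ℝ) ≤ (a i : ℝ) := fun i hi => by
    exact_mod_cast ha i hi
  have hb' : ∀ i, 1 ≤ i → (1:ℝ) ≤ (b i : ℝ) := fun i hi => by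
    exact_mod_cast hb i hi
  have hba : ∀ i, n ≤ i → (b i : ℝ) + 1 ≤ (a i : ℝ) := fun i hi => by
    have := hlt i hi
    exact_mod_cast this
  -- q is at least 1 and monotone
  have hqkey : ∀ k, 1 ≤ q k ∧ q k ≤ q (k+1) := by
    intro k
    induction k with
    | zero =>
      constructor
      · rw [hq0]
      · rw [hq0, hq1]; exact ha' 1 le_rfl
    | succ k ih =>
      obtain ⟨h1, h2⟩ := ih
      have h3 : 1 ≤ q (k+1) := le_trans h1 h2
      refine ⟨h3, ?_⟩
      rw [hq2 k]
      nlinarith [ha' (k+2) (by omega), hb' (k+2) (by omega)]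
  have hq1le : ∀ k, 1 ≤ q k := fun k => (hqkey k).1
  have hqpos : ∀ k, 0 < q k := fun k => lt_of_lt_of_le one_pos (hq1le k)
  have hqne : ∀ k, q k ≠ 0 := fun k => ne_of_gt (hqpos k)
  have hqmono : ∀ k, q k ≤ q (k+1) := fun k => (hqkey k).2
  -- the signed determinant
  set E : ℕ → ℝ := fun k => (-1)^k * (p (k+1) * q k - p k * q (k+1)) with hEdef
  have hE0 : E 0 = (b 1 : ℝ) := by
    simp [hEdef, hp0, hp1, hq0, hq1]
  have hErec : ∀ k, E (k+1) = (b (k+2) : ℝ) * E k := by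
    intro k
    simp only [hEdef]
    rw [hp2 k, hq2 k]
    ring
  have hEpos : ∀ k, 0 < E k := by
    intro k
    induction k with
    | zero => rw [hE0]; linarith [hb' 1 le_rfl]
    | succ k ih =>
      rw [hErec k]
      exact mul_pos (by linarith [hb' (k+2) (by omega)]) ih
  set t : ℕ → ℝ := fun k => E k / (q k * q (k+1)) with htdef
  have htpos : ∀ k, 0 < t k := fun k =>
    div_pos (hEpos k) (mul_pos (hqpos k) (hqpos (k+1)))
  set S : ℕ → ℝ := fun k => p k / q k with hSdef
  have hstep : ∀ k, S (k+1) - S k = (-1)^k * t k := by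
    intro k
    have hsq : ((-1:ℝ))^k * (-1)^k = 1 := by
      rw [← pow_add]; exact Even.neg_one_pow ⟨k, rfl⟩
    simp only [hSdef, htdef, hEdef]
    rw [div_sub_div _ _ (hqne (k+1)) (hqne k), ← mul_div_assoc, ← mul_assoc, hsq, one_mul]
    rw [div_eq_div_iff (mul_ne_zero (hqne (k+1)) (hqne k)) (mul_ne_zero (hqne k) (hqne (k+1)))]
    ring
  -- strict decrease of t
  have htstep : ∀ k, t (k+1) < t k := by
    intro k
    simp only [htdef]
    rw [div_lt_div_iff₀ (mul_pos (hqpos (k+1)) (hqpos (k+2))) (mul_pos (hqpos k) (hqpos (k+1)))]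
    rw [hErec k, hq2 k]
    nlinarith [mul_pos (mul_pos (hEpos k) (hqpos (k+1)))
        (mul_pos (lt_of_lt_of_le one_pos (ha' (k+2) (by omega))) (hqpos (k+1))),
      hEpos k, hqpos k, hqpos (k+1), hb' (k+2) (by omega)]
  have htanti : Antitone t := antitone_nat_of_succ_le (fun k => (htstep k).le)
  -- geometric decay past n
  have hthalf : ∀ k, n ≤ k → t (k+1) ≤ t k / 2 := by
    intro k hk
    simp only [htdef]
    rw [div_div, div_le_div_iff₀ (mul_pos (hqpos (k+1)) (hqpos (k+2)))
      (mul_pos (mul_pos (hqpos k) (hqpos (k+1))) two_pos)]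
    rw [hErec k, hq2 k]
    have hba2 := hba (k+2) (by omega)
    have hb2 := hb' (k+2) (by omega)
    have hE := hEpos k
    have hqm := hqmono k
    have hq1 := hq1le k
    have hq2' := hq1le (k+1)
    nlinarith [mul_nonneg (mul_nonneg hE.le (by linarith : (0:ℝ) ≤ (a (k+2):ℝ) - ((b (k+2):ℝ) + 1))) (mul_pos (hqpos (k+1)) (hqpos (k+1))).le,
      mul_nonneg (mul_nonneg hE.le (by linarith : (0:ℝ) ≤ (b (k+2):ℝ))) (mul_nonneg (hqpos (k+1)).le (by linarith : (0:ℝ) ≤ q (k+1) - q k)),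
      mul_pos (mul_pos hE (hqpos (k+1))) (hqpos k)]
  have hgeo : ∀ j, t (n + j) ≤ t n * (1/2)^j := by
    intro j
    induction j with
    | zero => simp
    | succ j ih =>
      have h1 := hthalf (n + j) (by omega)
      calc t (n + (j+1)) = t (n + j + 1) := by ring_nf
        _ ≤ t (n + j) / 2 := h1
        _ ≤ (t n * (1/2)^j) / 2 := by linarith
        _ = t n * (1/2)^(j+1) := by ring
  -- Cauchy sequence
  have hbound : ∀ k, t k ≤ (t 0 * 2^n) * (1/2)^k := by
    intro k
    have hpow : ∀ m : ℕ, ((1:ℝ)/2)^m = 2^n * (1/2)^(m+n) := by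
      intro m
      have h2n : (2:ℝ)^n * (1/2)^n = 1 := by rw [← mul_pow]; norm_num
      rw [pow_add,
        show (2:ℝ)^n * ((1/2)^m * (1/2)^n) = (1/2)^m * ((2:ℝ)^n * (1/2)^n) from by ring,
        h2n, mul_one]
    rcases le_or_gt n k with h | h
    · have h1 := hgeo (k - n)
      have e : n + (k - n) = k := by omega
      rw [e] at h1
      have h2 := hpow (k - n)
      rw [show k - n + n = k from by omega] at h2
      rw [h2] at h1
      have h3 : t n ≤ t 0 := htanti (Nat.zero_le n)
      have h4 : (0:ℝ) < 2^n * (1/2)^k := by positivity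
      calc t k ≤ t n * (2^n * (1/2)^k) := h1
        _ ≤ t 0 * (2^n * (1/2)^k) := by nlinarith [htpos 0]
        _ = (t 0 * 2^n) * (1/2)^k := by ring
    · have h1 : t k ≤ t 0 := htanti (Nat.zero_le k)
      have h2 : (1:ℝ) ≤ 2^n * (1/2)^k := by
        have e : n = (n - k) + k := by omega
        rw [e, pow_add, mul_assoc, ← mul_pow]
        norm_num
        exact one_le_pow₀ (by norm_num)
      nlinarith [htpos 0]
  have hcauchy : CauchySeq S := by
    apply cauchySeq_of_le_geometric (1/2) (t 0 * 2^n) (by norm_num)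
    intro k
    have : dist (S k) (S (k+1)) = t k := by
      rw [Real.dist_eq, abs_sub_comm, hstep k, abs_mul, abs_pow, abs_neg, abs_one,
        one_pow, one_mul, abs_of_pos (htpos k)]
    rw [this]
    exact hbound k
  obtain ⟨L, hL⟩ := cauchySeq_tendsto_of_complete hcauchy
  refine ⟨L, hL, ?_⟩
  -- even subsequence increasing, odd decreasing
  have heo : ∀ i, S (2*i+1) - S (2*i) = t (2*i) ∧ S (2*i+2) - S (2*i+1) = -t (2*i+1) := by
    intro i
    constructor
    · have h := hstep (2*i)
      rwa [Even.neg_one_pow (even_two_mul i), one_mul] at h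
    · have h := hstep (2*i+1)
      rwa [Odd.neg_one_pow ⟨i, rfl⟩, neg_one_mul] at h
  have hSeven : Monotone (fun i => S (2*i)) := by
    apply monotone_nat_of_le_succ
    intro i
    obtain ⟨h1, h2⟩ := heo i
    have e : 2*(i+1) = 2*i+2 := by omega
    simp only [e]
    have := htstep (2*i)
    linarith
  have hSodd : Antitone (fun i => S (2*i+1)) := by
    apply antitone_nat_of_succ_le
    intro i
    obtain ⟨h1, h2⟩ := heo (i+1)
    obtain ⟨h3, h4⟩ := heo i
    have e : 2*(i+1)+1 = 2*i+3 := by omega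
    have e2 : 2*(i+1) = 2*i+2 := by omega
    simp only [e]
    rw [e2] at h1
    have := htstep (2*i+1)
    linarith
  have hLeven : Filter.Tendsto (fun i => S (2*i)) Filter.atTop (nhds L) :=
    hL.comp (Filter.tendsto_atTop_mono (fun i => by simp; omega) Filter.tendsto_id)
  have hLodd : Filter.Tendsto (fun i => S (2*i+1)) Filter.atTop (nhds L) :=
    hL.comp (Filter.tendsto_atTop_mono (fun i => by simp; omega) Filter.tendsto_id)
  have hEvenLe : ∀ i, S (2*i) ≤ L := fun i =>
    ge_of_tendsto hLeven (Filter.eventually_atTop.mpr ⟨i, fun j hj => hSeven hj⟩)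
  have hOddGe : ∀ i, L ≤ S (2*i+1) := fun i =>
    le_of_tendsto hLodd (Filter.eventually_atTop.mpr ⟨i, fun j hj => hSodd hj⟩)
  -- strict sign alternation of L - S k
  have hsign : ∀ k, 0 < (-1:ℝ)^k * (L - S k) := by
    intro k
    rcases Nat.even_or_odd k with he | ho
    · rw [Even.neg_one_pow he, one_mul]
      obtain ⟨i, hi⟩ := he
      have hk : k = 2*i := by omega
      subst hk
      obtain ⟨h1, h2⟩ := heo i
      have h3 := hEvenLe (i+1)
      have e : 2*(i+1) = 2*i+2 := by omega
      rw [e] at h3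
      have := htstep (2*i)
      linarith
    · rw [Odd.neg_one_pow ho, neg_one_mul]
      obtain ⟨i, hi⟩ := ho
      subst hi
      obtain ⟨h1, h2⟩ := heo (i+1)
      obtain ⟨h3, h4⟩ := heo i
      have h5 := hOddGe (i+1)
      have e : 2*(i+1)+1 = 2*i+3 := by omega
      have e2 : 2*(i+1) = 2*i+2 := by omega
      rw [e] at h5
      rw [e2] at h1
      have := htstep (2*i+1)
      linarith
  -- now suppose L is rational
  rintro ⟨r, hr⟩
  set P : ℕ → ℤ := gcfRec a b 0 (b 1) with hPdef
  set Q : ℕ → ℤ := gcfRec a b 1 (a 1) with hQdef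
  have hPQ : ∀ k, (p k = (P k : ℝ) ∧ q k = (Q k : ℝ)) ∧
      (p (k+1) = (P (k+1) : ℝ) ∧ q (k+1) = (Q (k+1) : ℝ)) := by
    intro k
    induction k with
    | zero =>
      refine ⟨⟨?_, ?_⟩, ?_, ?_⟩ <;> simp [hPdef, hQdef, gcfRec, hp0, hp1, hq0, hq1]
    | succ k ih =>
      obtain ⟨⟨i1, i2⟩, i3, i4⟩ := ih
      refine ⟨⟨i3, i4⟩, ?_, ?_⟩
      · rw [hp2 k, i3, i1]
        show _ = ((gcfRec a b 0 (b 1) (k+2) : ℤ) : ℝ)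
        rw [show gcfRec a b 0 (b 1) (k+2) =
          a (k+2) * gcfRec a b 0 (b 1) (k+1) + b (k+2) * gcfRec a b 0 (b 1) k from rfl]
        push_cast
        rfl
      · rw [hq2 k, i4, i2]
        show _ = ((gcfRec a b 1 (a 1) (k+2) : ℤ) : ℝ)
        rw [show gcfRec a b 1 (a 1) (k+2) =
          a (k+2) * gcfRec a b 1 (a 1) (k+1) + b (k+2) * gcfRec a b 1 (a 1) k from rfl]
        push_cast
        rfl
  have hpP : ∀ k, p k = (P k : ℝ) := fun k => ((hPQ k).1).1
  have hqQ : ∀ k, q k = (Q k : ℝ) := fun k => ((hPQ k).1).2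
  have hQrec : ∀ k, Q (k+2) = a (k+2) * Q (k+1) + b (k+2) * Q k := fun k => rfl
  have hPrec : ∀ k, P (k+2) = a (k+2) * P (k+1) + b (k+2) * P k := fun k => rfl
  set u : ℤ := r.num with hudef
  set v : ℤ := (r.den : ℤ) with hvdef
  have hv : (0:ℝ) < (v:ℝ) := by
    simp only [hvdef]
    exact_mod_cast r.pos
  have hLr : L = (u:ℝ) / (v:ℝ) := by
    rw [← hr, Rat.cast_def]
    push_cast
    rfl
  set δ : ℕ → ℤ := fun k => u * Q k - v * P k with hδdef
  set g : ℕ → ℤ := fun k => (-1)^k * δ k with hgdef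
  have hgcast : ∀ k, ((g k : ℤ) : ℝ) = (v:ℝ) * q k * ((-1)^k * (L - S k)) := by
    intro k
    simp only [hgdef, hδdef, hSdef]
    rw [hLr]
    push_cast
    rw [← hpP k, ← hqQ k]
    have h1 : q k ≠ 0 := hqne k
    have h2 : ((r.den : ℤ) : ℝ) ≠ 0 := ne_of_gt hv
    field_simp [h1, h2]
  have hgpos : ∀ k, 0 < g k := by
    intro k
    have h : (0:ℝ) < ((g k : ℤ) : ℝ) := by
      rw [hgcast k]
      exact mul_pos (mul_pos hv (hqpos k)) (hsign k)
    exact_mod_cast h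
  have hδrec : ∀ k, δ (k+2) = a (k+2) * δ (k+1) + b (k+2) * δ k := by
    intro k
    simp only [hδdef]
    rw [hQrec k, hPrec k]
    ring
  have hgdec : ∀ k, n ≤ k → g (k+1) < g k := by
    intro k hk
    have h2 : g (k+2) = -(a (k+2)) * g (k+1) + b (k+2) * g k := by
      simp only [hgdef]
      rw [hδrec k]
      ring
    have hA := hgpos (k+2)
    have hB := hgpos (k+1)
    have hC := hgpos k
    have hba2 : b (k+2) + 1 ≤ a (k+2) := hlt (k+2) (by omega)
    have hb2 : 1 ≤ b (k+2) := hb (k+2) (by omega)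
    have ha2 : 1 ≤ a (k+2) := ha (k+2) (by omega)
    nlinarith [mul_nonneg (by omega : (0:ℤ) ≤ a (k+2) - 1 - b (k+2)) hC.le]
  -- infinite descent
  have hdesc : ∀ j, (g (n + j)).toNat + j ≤ (g n).toNat := by
    intro j
    induction j with
    | zero => simp
    | succ j ih =>
      have h1 := hgdec (n + j) (by omega)
      have h2 := hgpos (n + j + 1)
      have e : n + (j + 1) = n + j + 1 := by omega
      rw [e]
      omega
  have := hdesc ((g n).toNat + 1)
  omega
end

section
/- For every real number z, tanh(z) equals the value of the generalized continued fraction z/(1 + z^2/(3 + z^2/(5 + z^2/(7 + ...)))), i.e., with partial denominators 1, 3, 5, 7, ... and partial numerators z, z^2, z^2, .... -/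
/-!
Write `E n = sinh z * q n - cosh z * p n`, so that `p n / q n - tanh z = -E n / (q n * cosh z)`.
Being a linear combination of `p` and `q`, `E` satisfies the same three-term recurrence.
So does `(-z) ^ n * z * i_n(z)`, where `i_n` is the modified spherical Bessel function, by the
contiguous relation `i_n = (2n + 3)/z * i_(n+1) + i_(n+2)`; checking the first two terms
(`i_0 z = sinh z / z`, `i_1 z = (z cosh z - sinh z) / z²`) identifies the two sequences.
The power series of `i_n` gives `|E n| ≤ |z| * exp (z²) * (2z²)^n / n!`, which tends to `0`,
while `q n ≥ 1` and `cosh z ≥ 1`.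
-/

open Real Filter Topology Nat

lemma eq_of_twoStep_recurrence {α : Type*} (F : ℕ → α → α → α) {u v : ℕ → α}
    (hu : ∀ n, u (n + 2) = F n (u (n + 1)) (u n)) (hv : ∀ n, v (n + 2) = F n (v (n + 1)) (v n))
    (h0 : u 0 = v 0) (h1 : u 1 = v 1) : u = v := by
  funext n
  induction n using Nat.twoStepInduction with
  | zero => exact h0
  | one => exact h1
  | more n ih ih' => rw [hu, hv, ih, ih']

lemma add_two_eq_of_recurrence {u : ℕ → ℝ} {c : ℝ}
    (h : ∀ k, 2 ≤ k → u k = (2 * (k : ℝ) - 1) * u (k - 1) + c * u (k - 2)) (n : ℕ) :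
    u (n + 2) = (2 * n + 3) * u (n + 1) + c * u n := by
  rw [h (n + 2) (by omega)]
  push_cast
  ring_nf

lemma one_le_of_recurrence {u : ℕ → ℝ} {c : ℝ} (hc : 0 ≤ c) (h0 : 1 ≤ u 0) (h1 : 1 ≤ u 1)
    (hu : ∀ n, u (n + 2) = (2 * n + 3) * u (n + 1) + c * u n) (n : ℕ) : 1 ≤ u n := by
  induction n using Nat.twoStepInduction with
  | zero => exact h0
  | one => exact h1
  | more n ih ih' =>
    rw [hu]
    have : (1 : ℝ) ≤ 2 * n + 3 := by linarith [(n.cast_nonneg : (0 : ℝ) ≤ n)]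
    nlinarith

noncomputable def besselCoeff (n j : ℕ) : ℝ := (n + j)! / (j ! * (2 * (n + j) + 1)!)

/-- `(2 * z) ^ n * besselSeries (z ^ 2) n` is the modified spherical Bessel function `i_n z`. -/
noncomputable def besselSeries (x : ℝ) (n : ℕ) : ℝ := ∑' j, besselCoeff n j * x ^ j

lemma besselCoeff_nonneg (n j : ℕ) : 0 ≤ besselCoeff n j := by
  unfold besselCoeff; positivity

lemma besselCoeff_le (n j : ℕ) : besselCoeff n j ≤ (j ! * n ! : ℝ)⁻¹ := by
  have hdvd : (n + j)! * (n + j + 1)! ∣ (2 * (n + j) + 1)! := by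
    convert Nat.factorial_mul_factorial_dvd_factorial_add (n + j) (n + j + 1) using 2; ring
  have hle : (n + j)! * n ! ≤ (2 * (n + j) + 1)! :=
    (Nat.mul_le_mul_left _ (Nat.factorial_le (by omega))).trans
      (Nat.le_of_dvd (Nat.factorial_pos _) hdvd)
  rw [besselCoeff, div_le_iff₀ (by positivity), ← div_eq_inv_mul,
    le_div_iff₀ (by positivity)]
  calc ((n + j)! : ℝ) * (j ! * n !) = j ! * ((n + j)! * n ! : ℕ) := by rw [Nat.cast_mul]; ring
    _ ≤ j ! * (2 * (n + j) + 1)! := by gcongr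

lemma besselCoeff_zero_eq (n : ℕ) : besselCoeff n 0 = (4 * n + 6) * besselCoeff (n + 1) 0 := by
  simp only [besselCoeff, add_zero, show 2 * (n + 1) + 1 = (2 * n + 1) + 1 + 1 by ring,
    Nat.factorial_succ]
  push_cast
  field_simp
  ring

lemma besselCoeff_succ_eq (n j : ℕ) :
    besselCoeff n (j + 1) =
      (4 * n + 6) * besselCoeff (n + 1) (j + 1) + 4 * besselCoeff (n + 2) j := by
  simp only [besselCoeff, show n + 1 + (j + 1) = n + (j + 1) + 1 by ring,
    show n + 2 + j = n + (j + 1) + 1 by ring,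
    show 2 * (n + (j + 1) + 1) + 1 = 2 * (n + (j + 1)) + 1 + 1 + 1 by ring, Nat.factorial_succ]
  push_cast
  field_simp
  ring

lemma norm_besselCoeff_mul_pow_le (x : ℝ) (n j : ℕ) :
    ‖besselCoeff n j * x ^ j‖ ≤ |x| ^ j / j ! / n ! := by
  rw [norm_mul, norm_pow, Real.norm_of_nonneg (besselCoeff_nonneg n j), Real.norm_eq_abs,
    div_div, div_eq_mul_inv, mul_comm]
  gcongr
  exact besselCoeff_le n j

lemma summable_besselCoeff_mul_pow (x : ℝ) (n : ℕ) : Summable fun j => besselCoeff n j * x ^ j :=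
  .of_norm_bounded ((Real.summable_pow_div_factorial |x|).div_const _)
    (norm_besselCoeff_mul_pow_le x n)

lemma abs_besselSeries_le (x : ℝ) (n : ℕ) : |besselSeries x n| ≤ exp |x| / n ! := by
  have hexp : HasSum (fun j => |x| ^ j / j ! / n !) (exp |x| / n !) := by
    rw [Real.exp_eq_exp_ℝ]
    exact (NormedSpace.expSeries_div_hasSum_exp |x|).div_const _
  rw [← Real.norm_eq_abs, besselSeries]
  exact tsum_of_norm_bounded hexp (norm_besselCoeff_mul_pow_le x n)

lemma besselSeries_eq (x : ℝ) (n : ℕ) :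
    besselSeries x n = (4 * n + 6) * besselSeries x (n + 1) + 4 * x * besselSeries x (n + 2) := by
  have hsum := summable_besselCoeff_mul_pow x
  have hdiff := (hsum n).sub ((hsum (n + 1)).mul_left (4 * n + 6 : ℝ))
  have key : besselSeries x n - (4 * n + 6) * besselSeries x (n + 1)
      = 4 * x * besselSeries x (n + 2) := by
    rw [besselSeries, besselSeries, ← tsum_mul_left,
      ← (hsum n).tsum_sub ((hsum (n + 1)).mul_left _), hdiff.tsum_eq_zero_add,
      besselSeries, ← tsum_mul_left, besselCoeff_zero_eq n, mul_assoc, sub_self, zero_add]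
    exact tsum_congr fun j => by rw [besselCoeff_succ_eq n j]; ring
  linarith

lemma sinh_eq_mul_besselSeries (z : ℝ) : sinh z = z * besselSeries (z ^ 2) 0 := by
  rw [besselSeries, ← tsum_mul_left, sinh_eq_tsum]
  refine tsum_congr fun j => ?_
  rw [besselCoeff, zero_add, ← pow_mul, pow_succ]
  field_simp

lemma sinh_sub_mul_cosh_eq (z : ℝ) :
    sinh z - z * cosh z = -2 * z ^ 3 * besselSeries (z ^ 2) 1 := by
  have hsum := (hasSum_sinh z).summable.sub ((hasSum_cosh z).summable.mul_left z)
  rw [sinh_eq_tsum, cosh_eq_tsum, ← tsum_mul_left,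
    ← (hasSum_sinh z).summable.tsum_sub ((hasSum_cosh z).summable.mul_left z),
    hsum.tsum_eq_zero_add, besselSeries, ← tsum_mul_left]
  simp only [mul_zero, zero_add, pow_one, factorial_one, cast_one, div_one, pow_zero,
    factorial_zero, mul_one, sub_self, neg_mul]
  refine tsum_congr fun j => ?_
  rw [besselCoeff, add_comm 1 j, show 2 * (j + 1) + 1 = 2 * j + 1 + 1 + 1 by ring,
    show 2 * (j + 1) = 2 * j + 1 + 1 by ring, ← pow_mul]
  simp only [Nat.factorial_succ]
  push_cast
  field_simp
  ring

lemma abs_pow_mul_besselSeries_le (z : ℝ) (n : ℕ) :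
    |(-2) ^ n * z ^ (2 * n + 1) * besselSeries (z ^ 2) n| ≤
      |z| * exp (z ^ 2) * ((2 * z ^ 2) ^ n / n !) := by
  have hS := abs_besselSeries_le (z ^ 2) n
  rw [abs_sq] at hS
  calc |(-2) ^ n * z ^ (2 * n + 1) * besselSeries (z ^ 2) n|
      = |z| * (2 * z ^ 2) ^ n * |besselSeries (z ^ 2) n| := by
        rw [abs_mul, abs_mul, abs_pow, abs_pow, abs_neg, abs_two, pow_succ, pow_mul, sq_abs,
          mul_pow]
        ring
    _ ≤ |z| * (2 * z ^ 2) ^ n * (exp (z ^ 2) / n !) := by gcongr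
    _ = |z| * exp (z ^ 2) * ((2 * z ^ 2) ^ n / n !) := by ring

lemma abs_div_sub_tanh_le {x p q : ℝ} (hq : 1 ≤ q) :
    |p / q - tanh x| ≤ |sinh x * q - cosh x * p| := by
  have hcosh : 1 ≤ cosh x := one_le_cosh x
  have hdiff : p / q - tanh x = -(sinh x * q - cosh x * p) / (q * cosh x) := by
    rw [tanh_eq_sinh_div_cosh]
    field_simp
    ring
  rw [hdiff, abs_div, abs_neg, abs_of_pos (by positivity : 0 < q * cosh x)]
  exact div_le_self (abs_nonneg _) (by nlinarith)

lemma sinh_mul_sub_cosh_mul_eq {z : ℝ} {p q : ℕ → ℝ} (hp0 : p 0 = 0) (hp1 : p 1 = z)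
    (hq0 : q 0 = 1) (hq1 : q 1 = 1)
    (hp : ∀ n, p (n + 2) = (2 * n + 3) * p (n + 1) + z ^ 2 * p n)
    (hq : ∀ n, q (n + 2) = (2 * n + 3) * q (n + 1) + z ^ 2 * q n) (n : ℕ) :
    sinh z * q n - cosh z * p n = (-2) ^ n * z ^ (2 * n + 1) * besselSeries (z ^ 2) n := by
  refine congrFun (eq_of_twoStep_recurrence (fun n a b => (2 * n + 3) * a + z ^ 2 * b)
    (u := fun n => sinh z * q n - cosh z * p n)
    (v := fun n => (-2) ^ n * z ^ (2 * n + 1) * besselSeries (z ^ 2) n)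
    (fun n => ?_) (fun n => ?_) ?_ ?_) n
  · rw [hp, hq]; ring
  · rw [besselSeries_eq (z ^ 2) n]; ring
  · rw [hp0, hq0, sinh_eq_mul_besselSeries]; ring
  · rw [hp1, hq1]; linear_combination sinh_sub_mul_cosh_eq z

/-- Gauss's continued fraction for tanh: `tanh z = z/(1 + z²/(3 + z²/(5 + ...)))`,
as the limit of the convergents `p k / q k`. -/
theorem tanh_gauss_cf (z : ℝ) (p q : ℕ → ℝ)
    (hp0 : p 0 = 0) (hp1 : p 1 = z)
    (hq0 : q 0 = 1) (hq1 : q 1 = 1)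
    (hp : ∀ k, 2 ≤ k → p k = (2 * (k : ℝ) - 1) * p (k - 1) + z ^ 2 * p (k - 2))
    (hq : ∀ k, 2 ≤ k → q k = (2 * (k : ℝ) - 1) * q (k - 1) + z ^ 2 * q (k - 2)) :
    Filter.Tendsto (fun k => p k / q k) Filter.atTop (nhds (Real.tanh z)) := by
  have hp' := add_two_eq_of_recurrence hp
  have hq' := add_two_eq_of_recurrence hq
  have hq_ge : ∀ n, 1 ≤ q n :=
    one_le_of_recurrence (sq_nonneg z) hq0.symm.le hq1.symm.le hq'
  have hbound : Tendsto (fun n => |z| * exp (z ^ 2) * ((2 * z ^ 2) ^ n / n !)) atTop (𝓝 0) := by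
    simpa using (FloorSemiring.tendsto_pow_div_factorial_atTop (2 * z ^ 2)).const_mul
      (|z| * exp (z ^ 2))
  rw [← tendsto_sub_nhds_zero_iff]
  refine squeeze_zero_norm (fun n => ?_) hbound
  calc ‖p n / q n - tanh z‖ ≤ |sinh z * q n - cosh z * p n| := abs_div_sub_tanh_le (hq_ge n)
    _ ≤ |z| * exp (z ^ 2) * ((2 * z ^ 2) ^ n / n !) := by
      rw [sinh_mul_sub_cosh_mul_eq hp0 hp1 hq0 hq1 hp' hq' n]
      exact abs_pow_mul_besselSeries_le z n
end

section
/- For positive integers x and y, tanh(x/y) equals the generalized continued fraction x/(y + x^2/(3y + x^2/(5y + x^2/(7y + ...)))), with partial denominators (2k-1)y and partial numerators x (first) and x^2 (subsequent). -/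
open Nat Real Filter

/-- Coefficients of the Bessel-type tail series. -/
noncomputable def gaussA (n j : ℕ) : ℝ :=
  2 ^ n * (n + j)! / ((j)! * (2 * n + 2 * j + 1)!)

lemma gaussA_pos (n j : ℕ) : 0 < gaussA n j := by
  unfold gaussA
  positivity

lemma gaussA_zero_rec (n : ℕ) : gaussA n 0 = (2 * (n : ℝ) + 3) * gaussA (n + 1) 0 := by
  unfold gaussA
  have h1 : (n + 1) + 0 = (n + 0) + 1 := by omega
  have h2 : 2 * (n + 1) + 2 * 0 + 1 = (2 * n + 2 * 0 + 1) + 1 + 1 := by omega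
  rw [h1, h2, Nat.factorial_succ ((2*n+2*0+1)+1), Nat.factorial_succ (2*n+2*0+1),
    Nat.factorial_succ (n+0)]
  have hne : ((2*n+2*0+1)! : ℝ) ≠ 0 := by positivity
  push_cast
  field_simp
  ring

lemma gaussA_rec (n j : ℕ) :
    gaussA n (j + 1) = (2 * (n : ℝ) + 3) * gaussA (n + 1) (j + 1) + gaussA (n + 2) j := by
  unfold gaussA
  have h1 : n + (j + 1) = (n + j) + 1 := by omega
  have h2 : (n + 1) + (j + 1) = ((n + j) + 1) + 1 := by omega
  have h3 : (n + 2) + j = ((n + j) + 1) + 1 := by omega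
  have h4 : 2 * n + 2 * (j + 1) + 1 = ((2 * (n + j) + 1) + 1) + 1 := by omega
  have h5 : 2 * (n + 1) + 2 * (j + 1) + 1 = ((((2 * (n + j) + 1) + 1) + 1) + 1) + 1 := by omega
  have h6 : 2 * (n + 2) + 2 * j + 1 = ((((2 * (n + j) + 1) + 1) + 1) + 1) + 1 := by omega
  rw [h1, h2, h3, h4, h5, h6]
  simp only [Nat.factorial_succ, pow_succ]
  have hne1 : ((n + j)! : ℝ) ≠ 0 := by positivity
  have hne2 : ((j)! : ℝ) ≠ 0 := by positivity
  have hne3 : ((2 * (n + j) + 1)! : ℝ) ≠ 0 := by positivity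
  push_cast
  field_simp
  ring

lemma fact_ineq (n : ℕ) : ∀ j, (n + j)! * (2 * n + 1)! ≤ n ! * (2 * n + 2 * j + 1)! := by
  intro j
  induction j with
  | zero => simp
  | succ j ih =>
    have h1 : n + (j + 1) = (n + j) + 1 := by omega
    have h2 : 2 * n + 2 * (j + 1) + 1 = ((2 * n + 2 * j + 1) + 1) + 1 := by omega
    rw [h1, h2, Nat.factorial_succ, Nat.factorial_succ ((2*n+2*j+1)+1), Nat.factorial_succ]
    calc (n + j + 1) * (n + j)! * (2 * n + 1)!
        = (n + j + 1) * ((n + j)! * (2 * n + 1)!) := by ring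
      _ ≤ (n + j + 1) * (n ! * (2 * n + 2 * j + 1)!) := Nat.mul_le_mul_left _ ih
      _ ≤ ((2 * n + 2 * j + 1 + 1) * ((2 * n + 2 * j + 1) + 1 + 1)) *
            (n ! * (2 * n + 2 * j + 1)!) := by
          apply Nat.mul_le_mul_right
          nlinarith
      _ = n ! * ((2 * n + 2 * j + 1 + 1 + 1) * ((2 * n + 2 * j + 1 + 1) * (2 * n + 2 * j + 1)!)) := by
          ring
      _ ≤ n ! * ((2 * n + 2 * j + 1 + 1 + 1) * ((2 * n + 2 * j + 1 + 1) * (2 * n + 2 * j + 1)!)) :=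
          le_refl _

lemma gaussA_le (n j : ℕ) : gaussA n j ≤ gaussA n 0 * (1 / (j)!) := by
  unfold gaussA
  simp only [Nat.mul_zero, Nat.add_zero, Nat.factorial_zero, Nat.cast_one, one_mul]
  have key : ((n + j)! : ℝ) * (2 * n + 1)! ≤ (n)! * (2 * n + 2 * j + 1)! := by
    exact_mod_cast fact_ineq n j
  have hpos : (0:ℝ) < (j)! * (2 * n + 2 * j + 1)! := by positivity
  rw [mul_one_div, div_div, div_le_div_iff₀ hpos (by positivity)]
  calc 2 ^ n * ((n + j)! : ℝ) * ((2 * n + 1)! * (j)!)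
      = (2 ^ n * (j)!) * (((n + j)!) * ((2 * n + 1)!)) := by ring
    _ ≤ (2 ^ n * (j)!) * ((n)! * ((2 * n + 2 * j + 1)!)) :=
        mul_le_mul_of_nonneg_left key (by positivity)
    _ = 2 ^ n * ((n)! : ℝ) * ((j)! * (2 * n + 2 * j + 1)!) := by ring

lemma summable_gauss (z : ℝ) (n : ℕ) : Summable (fun j => gaussA n j * (z ^ 2) ^ j) := by
  refine Summable.of_nonneg_of_le (fun j => mul_nonneg (gaussA_pos n j).le (by positivity))
    (fun j => ?_) ((Real.summable_pow_div_factorial (z ^ 2)).mul_left (gaussA n 0))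
  have h := gaussA_le n j
  have hz : (0:ℝ) ≤ (z ^ 2) ^ j := by positivity
  calc gaussA n j * (z ^ 2) ^ j ≤ (gaussA n 0 * (1 / (j)!)) * (z ^ 2) ^ j :=
        mul_le_mul_of_nonneg_right h hz
    _ = gaussA n 0 * ((z ^ 2) ^ j / (j)!) := by ring

/-- The Bessel-type tail functions. -/
noncomputable def gaussG (z : ℝ) (n : ℕ) : ℝ := ∑' j, gaussA n j * (z ^ 2) ^ j

lemma gaussG_nonneg (z : ℝ) (n : ℕ) : 0 ≤ gaussG z n :=
  tsum_nonneg fun j => mul_nonneg (gaussA_pos _ j).le (by positivity)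

lemma gaussG_rec (z : ℝ) (n : ℕ) :
    gaussG z n = (2 * (n : ℝ) + 3) * gaussG z (n + 1) + z ^ 2 * gaussG z (n + 2) := by
  classical
  set g : ℕ → ℝ := fun j => match j with
    | 0 => 0
    | (j + 1) => z ^ 2 * (gaussA (n + 2) j * (z ^ 2) ^ j) with hgdef
  have hgsum : Summable g := by
    rw [← summable_nat_add_iff 1]
    exact ((summable_gauss z (n + 2)).mul_left (z ^ 2)).congr (fun j => rfl)
  have hg : ∀ j, gaussA n j * (z ^ 2) ^ j =
      (2 * (n : ℝ) + 3) * (gaussA (n + 1) j * (z ^ 2) ^ j) + g j := by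
    intro j
    cases j with
    | zero =>
        show gaussA n 0 * (z ^ 2) ^ 0 =
          (2 * (n : ℝ) + 3) * (gaussA (n + 1) 0 * (z ^ 2) ^ 0) + 0
        simp only [pow_zero, mul_one, add_zero]
        exact gaussA_zero_rec n
    | succ j =>
        have := gaussA_rec n j
        simp only [hgdef]
        rw [this]
        ring
  calc gaussG z n = ∑' j, ((2 * (n : ℝ) + 3) * (gaussA (n + 1) j * (z ^ 2) ^ j) + g j) :=
        tsum_congr hg
    _ = (2 * (n : ℝ) + 3) * gaussG z (n + 1) + ∑' j, g j := by
        rw [Summable.tsum_add ((summable_gauss z (n + 1)).mul_left _) hgsum, tsum_mul_left]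
        rfl
    _ = (2 * (n : ℝ) + 3) * gaussG z (n + 1) + z ^ 2 * gaussG z (n + 2) := by
        congr 1
        rw [Summable.tsum_eq_zero_add hgsum]
        simp only [hgdef]
        rw [zero_add, tsum_mul_left]
        rfl

lemma gaussA_zero_eval (j : ℕ) : gaussA 0 j = 1 / ((2 * j + 1)! : ℝ) := by
  unfold gaussA
  have h : (0:ℕ) + j = j := by omega
  have h2 : 2 * 0 + 2 * j + 1 = 2 * j + 1 := by omega
  rw [h, h2, pow_zero, one_mul]
  rw [div_eq_div_iff (by positivity) (by positivity)]
  ring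

lemma gaussA_one_eval (j : ℕ) : gaussA 1 j = 2 * ((j : ℝ) + 1) / ((2 * j + 3)! : ℝ) := by
  unfold gaussA
  have h : (1:ℕ) + j = j + 1 := by omega
  have h2 : 2 * 1 + 2 * j + 1 = 2 * j + 3 := by omega
  rw [h, h2, Nat.factorial_succ]
  have hne : ((j)! : ℝ) ≠ 0 := by positivity
  have hne2 : ((2 * j + 3)! : ℝ) ≠ 0 := by positivity
  push_cast
  field_simp

lemma sinh_eq_gauss (z : ℝ) : Real.sinh z = z * gaussG z 0 := by
  rw [Real.sinh_eq_tsum, gaussG, ← tsum_mul_left]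
  apply tsum_congr
  intro j
  rw [gaussA_zero_eval]
  rw [pow_succ, pow_mul]
  ring

lemma cosh_eq_gauss (z : ℝ) : Real.cosh z = gaussG z 0 + z ^ 2 * gaussG z 1 := by
  classical
  set g : ℕ → ℝ := fun j => match j with
    | 0 => 0
    | (j + 1) => z ^ 2 * (gaussA 1 j * (z ^ 2) ^ j) with hgdef
  have hgsum : Summable g := by
    rw [← summable_nat_add_iff 1]
    exact ((summable_gauss z 1).mul_left (z ^ 2)).congr (fun j => rfl)
  have hg : ∀ j, z ^ (2 * j) / ((2 * j)! : ℝ) = gaussA 0 j * (z ^ 2) ^ j + g j := by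
    intro j
    cases j with
    | zero => simp [hgdef, gaussA_zero_eval]
    | succ j =>
        show z ^ (2 * (j + 1)) / ((2 * (j + 1))! : ℝ) =
          gaussA 0 (j + 1) * (z ^ 2) ^ (j + 1) + z ^ 2 * (gaussA 1 j * (z ^ 2) ^ j)
        rw [gaussA_zero_eval, gaussA_one_eval]
        have h1 : 2 * (j + 1) + 1 = (2 * (j + 1)) + 1 := by omega
        have h2 : 2 * j + 3 = (2 * (j + 1)) + 1 := by omega
        have h3 : (2 * (j + 1)) = (2 * j + 1) + 1 := by omega
        rw [h1, h2, Nat.factorial_succ (2 * (j + 1))]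
        rw [h3, Nat.factorial_succ (2 * j + 1)]
        have hne : ((2 * j + 1)! : ℝ) ≠ 0 := by positivity
        have hp : z ^ (2 * j + 1 + 1) = (z ^ 2) ^ (j + 1) := by
          rw [← pow_mul]; congr 1
        rw [hp]
        push_cast
        field_simp
        ring
  rw [Real.cosh_eq_tsum]
  calc (∑' j, z ^ (2 * j) / ((2 * j)! : ℝ))
      = ∑' j, (gaussA 0 j * (z ^ 2) ^ j + g j) := tsum_congr hg
    _ = gaussG z 0 + ∑' j, g j := by
        rw [Summable.tsum_add (summable_gauss z 0) hgsum]; rfl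
    _ = gaussG z 0 + z ^ 2 * gaussG z 1 := by
        congr 1
        rw [Summable.tsum_eq_zero_add hgsum]
        simp only [hgdef]
        rw [zero_add, tsum_mul_left]
        rfl

/-- Numerators of the convergents of the continued fraction for `tanh`. -/
noncomputable def gaussP (z : ℝ) : ℕ → ℝ
  | 0 => 0
  | 1 => z
  | (n + 2) => (2 * (n : ℝ) + 3) * gaussP z (n + 1) + z ^ 2 * gaussP z n

/-- Denominators of the convergents of the continued fraction for `tanh`. -/
noncomputable def gaussQ (z : ℝ) : ℕ → ℝ
  | 0 => 1
  | 1 => 1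
  | (n + 2) => (2 * (n : ℝ) + 3) * gaussQ z (n + 1) + z ^ 2 * gaussQ z n

lemma one_le_gaussQ (z : ℝ) : ∀ k, 1 ≤ gaussQ z k := by
  intro k
  induction k using Nat.twoStepInduction with
  | zero => simp [gaussQ]
  | one => simp [gaussQ]
  | more n ih2 ih1 =>
    show 1 ≤ (2 * (n : ℝ) + 3) * gaussQ z (n + 1) + z ^ 2 * gaussQ z n
    nlinarith [sq_nonneg z, ih1, ih2, (show (0:ℝ) ≤ (n:ℝ) from Nat.cast_nonneg n)]

lemma gauss_error (z : ℝ) : ∀ k,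
    Real.sinh z * gaussQ z k - Real.cosh z * gaussP z k =
      (-1) ^ k * z ^ (2 * k + 1) * gaussG z k := by
  intro k
  induction k using Nat.twoStepInduction with
  | zero =>
    show Real.sinh z * 1 - Real.cosh z * 0 = (-1) ^ 0 * z ^ 1 * gaussG z 0
    rw [sinh_eq_gauss]; ring
  | one =>
    show Real.sinh z * 1 - Real.cosh z * z = (-1) ^ 1 * z ^ 3 * gaussG z 1
    rw [sinh_eq_gauss, cosh_eq_gauss]; ring
  | more n ih2 ih1 =>
    show Real.sinh z * ((2 * (n : ℝ) + 3) * gaussQ z (n + 1) + z ^ 2 * gaussQ z n) -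
        Real.cosh z * ((2 * (n : ℝ) + 3) * gaussP z (n + 1) + z ^ 2 * gaussP z n) =
        (-1) ^ (n + 2) * z ^ (2 * (n + 2) + 1) * gaussG z (n + 2)
    have expand : Real.sinh z * ((2 * (n : ℝ) + 3) * gaussQ z (n + 1) + z ^ 2 * gaussQ z n) -
        Real.cosh z * ((2 * (n : ℝ) + 3) * gaussP z (n + 1) + z ^ 2 * gaussP z n) =
        (2 * (n : ℝ) + 3) * (Real.sinh z * gaussQ z (n + 1) - Real.cosh z * gaussP z (n + 1)) +
        z ^ 2 * (Real.sinh z * gaussQ z n - Real.cosh z * gaussP z n) := by ring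
    rw [expand, ih1, ih2, gaussG_rec z n]
    have h1 : 2 * (n + 1) + 1 = 2 * n + 3 := by omega
    have h2 : 2 * (n + 2) + 1 = 2 * n + 5 := by omega
    rw [h1, h2]
    ring

lemma fact_sq_le (n : ℕ) : n ! * n ! ≤ (2 * n + 1)! := by
  have h := Nat.choose_mul_factorial_mul_factorial (show n ≤ 2 * n + 1 by omega)
  have h1 : 2 * n + 1 - n = n + 1 := by omega
  rw [h1] at h
  calc n ! * n ! ≤ n ! * (n + 1)! := by
        exact Nat.mul_le_mul_left _ (Nat.factorial_le (by omega))
    _ ≤ (2 * n + 1).choose n * n ! * (n + 1)! := by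
        have := Nat.choose_pos (show n ≤ 2 * n + 1 by omega)
        calc n ! * (n + 1)! = 1 * (n ! * (n + 1)!) := by ring
          _ ≤ (2 * n + 1).choose n * (n ! * (n + 1)!) := Nat.mul_le_mul_right _ this
          _ = (2 * n + 1).choose n * n ! * (n + 1)! := by ring
    _ = (2 * n + 1)! := h

lemma gaussA_head_le (n : ℕ) : gaussA n 0 ≤ 2 ^ n / (n)! := by
  unfold gaussA
  simp only [Nat.add_zero, Nat.mul_zero, Nat.factorial_zero, Nat.cast_one, one_mul]
  rw [div_le_div_iff₀ (by positivity) (by positivity)]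
  have key : ((n)! : ℝ) * (n)! ≤ (2 * n + 1)! := by exact_mod_cast fact_sq_le n
  calc (2:ℝ) ^ n * (n)! * (n)! = 2 ^ n * ((n)! * (n)!) := by ring
    _ ≤ 2 ^ n * (2 * n + 1)! := mul_le_mul_of_nonneg_left key (by positivity)

lemma gaussG_le (z : ℝ) (n : ℕ) :
    gaussG z n ≤ gaussA n 0 * ∑' j, (z ^ 2) ^ j / (j)! := by
  rw [← tsum_mul_left]
  apply Summable.tsum_le_tsum _ (summable_gauss z n)
    (((Real.summable_pow_div_factorial (z ^ 2)).mul_left (gaussA n 0)))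
  intro j
  have h := gaussA_le n j
  calc gaussA n j * (z ^ 2) ^ j ≤ (gaussA n 0 * (1 / (j)!)) * (z ^ 2) ^ j :=
        mul_le_mul_of_nonneg_right h (by positivity)
    _ = gaussA n 0 * ((z ^ 2) ^ j / (j)!) := by ring

/-- Gauss's continued fraction for tanh(x/y) after clearing denominators:
`tanh (x/y) = x/(y + x²/(3y + x²/(5y + ...)))`, as the limit of convergents. -/
theorem tanh_rat_gauss_cf (x y : ℕ) (hx : 0 < x) (hy : 0 < y) (p q : ℕ → ℝ)
    (hp0 : p 0 = 0) (hp1 : p 1 = (x : ℝ))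
    (hq0 : q 0 = 1) (hq1 : q 1 = (y : ℝ))
    (hp : ∀ k, 2 ≤ k → p k = (2 * (k : ℝ) - 1) * (y : ℝ) * p (k - 1) + (x : ℝ) ^ 2 * p (k - 2))
    (hq : ∀ k, 2 ≤ k → q k = (2 * (k : ℝ) - 1) * (y : ℝ) * q (k - 1) + (x : ℝ) ^ 2 * q (k - 2)) :
    Filter.Tendsto (fun k => p k / q k) Filter.atTop
      (nhds (Real.tanh ((x : ℝ) / (y : ℝ)))) := by
  have hy' : (0:ℝ) < (y:ℝ) := by exact_mod_cast hy
  have hx' : (0:ℝ) < (x:ℝ) := by exact_mod_cast hx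
  set z : ℝ := (x:ℝ) / (y:ℝ) with hzdef
  have hz : 0 < z := div_pos hx' hy'
  have hxz : (x:ℝ) = z * y := by rw [hzdef]; field_simp
  have hscale : ∀ k, p k = (y:ℝ) ^ k * gaussP z k ∧ q k = (y:ℝ) ^ k * gaussQ z k := by
    intro k
    induction k using Nat.twoStepInduction with
    | zero => constructor <;> simp [hp0, hq0, gaussP, gaussQ]
    | one =>
        constructor
        · rw [hp1, hxz]; simp [gaussP]; ring
        · rw [hq1]; simp [gaussQ]
    | more n ih2 ih1 =>
        have hp2 := hp (n + 2) (by omega)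
        have hq2 := hq (n + 2) (by omega)
        have e1 : n + 2 - 1 = n + 1 := by omega
        have e2 : n + 2 - 2 = n := by omega
        rw [e1, e2] at hp2 hq2
        constructor
        · rw [hp2, ih1.1, ih2.1, hxz]
          show _ = (y:ℝ) ^ (n + 2) *
            ((2 * (n : ℝ) + 3) * gaussP z (n + 1) + z ^ 2 * gaussP z n)
          push_cast
          ring
        · rw [hq2, ih1.2, ih2.2, hxz]
          show _ = (y:ℝ) ^ (n + 2) *
            ((2 * (n : ℝ) + 3) * gaussQ z (n + 1) + z ^ 2 * gaussQ z n)
          push_cast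
          ring
  have hratio : ∀ k, p k / q k = gaussP z k / gaussQ z k := by
    intro k
    rw [(hscale k).1, (hscale k).2,
      mul_div_mul_left _ _ (by positivity : ((y:ℝ) ^ k ≠ 0))]
  set C := ∑' j, (z ^ 2) ^ j / (j)! with hC
  have hC0 : 0 ≤ C := tsum_nonneg fun j => by positivity
  have hbound : ∀ k, |gaussP z k / gaussQ z k - Real.tanh z| ≤
      (C * z) * ((2 * z ^ 2) ^ k / (k)!) := by
    intro k
    have hQ := one_le_gaussQ z k
    have hQ0 : (0:ℝ) < gaussQ z k := zero_lt_one.trans_le hQ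
    have hden : (0:ℝ) < gaussQ z k * Real.cosh z := mul_pos hQ0 (Real.cosh_pos z)
    have herr := gauss_error z k
    have hkey : gaussP z k / gaussQ z k - Real.tanh z =
        -((-1) ^ k * z ^ (2 * k + 1) * gaussG z k) / (gaussQ z k * Real.cosh z) := by
      rw [Real.tanh_eq_sinh_div_cosh,
        div_sub_div _ _ hQ0.ne' (Real.cosh_pos (x := z)).ne']
      congr 1
      linarith [herr]
    rw [hkey, abs_div, abs_of_pos hden, abs_neg, abs_mul, abs_mul, abs_pow, abs_neg, abs_one,
      one_pow, one_mul, abs_of_pos (pow_pos hz (2 * k + 1)),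
      abs_of_nonneg (gaussG_nonneg z k)]
    have hGnn : 0 ≤ gaussG z k := gaussG_nonneg z k
    have step1 : z ^ (2 * k + 1) * gaussG z k / (gaussQ z k * Real.cosh z) ≤
        z ^ (2 * k + 1) * gaussG z k := by
      apply _root_.div_le_self (by positivity)
      nlinarith [Real.one_le_cosh z, hQ]
    have step2 : gaussG z k ≤ (2 ^ k / (k)!) * C :=
      le_trans (gaussG_le z k) (mul_le_mul_of_nonneg_right (gaussA_head_le k) hC0)
    have hzp : z ^ (2 * k + 1) = z * (z ^ 2) ^ k := by
      rw [pow_succ, ← pow_mul, mul_comm 2 k]; ring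
    calc z ^ (2 * k + 1) * gaussG z k / (gaussQ z k * Real.cosh z)
        ≤ z ^ (2 * k + 1) * gaussG z k := step1
      _ ≤ z ^ (2 * k + 1) * ((2 ^ k / (k)!) * C) :=
          mul_le_mul_of_nonneg_left step2 (by positivity)
      _ = (C * z) * ((2 * z ^ 2) ^ k / (k)!) := by
          rw [hzp, mul_pow]; ring
  have hlim : Filter.Tendsto (fun k => (C * z) * ((2 * z ^ 2) ^ k / (k)!))
      Filter.atTop (nhds 0) := by
    have h := FloorSemiring.tendsto_pow_div_factorial_atTop (K := ℝ) (2 * z ^ 2)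
    simpa using h.const_mul (C * z)
  have hmain : Filter.Tendsto (fun k => gaussP z k / gaussQ z k) Filter.atTop
      (nhds (Real.tanh z)) := by
    rw [tendsto_iff_dist_tendsto_zero]
    simp only [Real.dist_eq]
    exact squeeze_zero (fun k => abs_nonneg _) hbound hlim
  exact hmain.congr (fun k => (hratio k).symm)
end
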